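/- arXiv:2405.13813 — 5 statements merged into one kernel-verified Lean document; each statement's English description precedes it below -/
import Mathlib

section
/- Let m ≥ 1, α ∈ (0,1), θ > 0, t ≥ 0 and λ_1,…,λ_m > 0, and let ν be a probability measure on [0,∞) satisfying ∫₀^∞ e^{−u x} dν(x) = exp(−t((u+θ)^α − θ^α)) for all u ≥ 0. Then for all u_1,…,u_m ∈ [0,1] the probability generating function of the multivariate tempered space-fractional Poisson process at time t satisfies Σ_{k ∈ ℕ^m} (∏_{j=1}^m u_j^{k_j}) ∫₀^∞ ∏_{j=1}^m e^{−λ_j x} (λ_j x)^{k_j}/k_j! dν(x) = exp(−t((Σ_{j=1}^m λ_j(1−u_j) + θ)^α − θ^α)) =: G(u;t). Moreover, for each fixed u ∈ [0,1]^m the map t ↦ G(u;t) is differentiable with dG/dt = −((Σ_{j=1}^m λ_j(1−u_j) + θ)^α − θ^α)·G(u;t) and G(u;0) = 1. -/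
open MeasureTheory Real

lemma exp_tsum_div (y : ℝ) : ∑' n : ℕ, y ^ n / (Nat.factorial n : ℝ) = Real.exp y := by
  rw [Real.exp_eq_exp_ℝ, NormedSpace.exp_eq_tsum_div]

lemma ennreal_tsum_pi_prod : ∀ (m : ℕ) (f : Fin m → ℕ → ENNReal),
    ∑' k : Fin m → ℕ, ∏ j, f j (k j) = ∏ j, ∑' n, f j n := by
  intro m
  induction m with
  | zero =>
      intro f
      simp [tsum_eq_single (default : Fin 0 → ℕ) (fun b hb => absurd (Subsingleton.elim b default) hb)]
  | succ m ih =>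
      intro f
      rw [← Equiv.tsum_eq (Fin.consEquiv (fun _ : Fin (m+1) => ℕ)) (fun k => ∏ j, f j (k j))]
      have : ∀ p : ℕ × (Fin m → ℕ),
          (∏ j, f j ((Fin.consEquiv (fun _ : Fin (m+1) => ℕ)) p j))
            = f 0 p.1 * ∏ j : Fin m, f j.succ (p.2 j) := by
        intro p
        rw [Fin.prod_univ_succ]
        simp [Fin.consEquiv]
      simp_rw [this]
      rw [ENNReal.tsum_prod']
      simp_rw [ENNReal.tsum_mul_left, ENNReal.tsum_mul_right]
      rw [ih (fun j => f j.succ), Fin.prod_univ_succ]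

/-- pgf of the multivariate tempered space-fractional Poisson process,
its governing ODE and initial condition. -/
theorem mtsfpp_pgf
    {m : ℕ} (hm : 1 ≤ m) {α θ t : ℝ}
    (hα : α ∈ Set.Ioo (0:ℝ) 1) (hθ : 0 < θ) (ht : 0 ≤ t)
    (lam : Fin m → ℝ) (hlam : ∀ j, 0 < lam j)
    (ν : Measure ℝ) [IsProbabilityMeasure ν] (hνsupp : ν (Set.Iio 0) = 0)
    (hLap : ∀ u : ℝ, 0 ≤ u →
      ∫ x, Real.exp (-u * x) ∂ν = Real.exp (-t * ((u + θ) ^ α - θ ^ α)))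
    (u : Fin m → ℝ) (hu : ∀ j, u j ∈ Set.Icc (0:ℝ) 1) :
    (∑' k : Fin m → ℕ, (∏ j, u j ^ k j) *
        ∫ x, ∏ j, Real.exp (-(lam j) * x) * (lam j * x) ^ (k j) / (Nat.factorial (k j) : ℝ) ∂ν)
      = Real.exp (-t * ((∑ j, lam j * (1 - u j) + θ) ^ α - θ ^ α)) ∧
    (∀ s : ℝ, HasDerivAt
        (fun r : ℝ => Real.exp (-r * ((∑ j, lam j * (1 - u j) + θ) ^ α - θ ^ α)))
        (-((∑ j, lam j * (1 - u j) + θ) ^ α - θ ^ α) *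
          Real.exp (-s * ((∑ j, lam j * (1 - u j) + θ) ^ α - θ ^ α))) s) ∧
    Real.exp (-(0:ℝ) * ((∑ j, lam j * (1 - u j) + θ) ^ α - θ ^ α)) = 1 := by
  set c : ℝ := ∑ j, lam j * (1 - u j) with hc_def
  have hc : 0 ≤ c :=
    Finset.sum_nonneg fun j _ => mul_nonneg (hlam j).le (sub_nonneg.mpr (hu j).2)
  refine ⟨?_, ?_, by simp⟩
  · -- main identity
    set G : (Fin m → ℕ) → ℝ → ℝ := fun k x =>
      ∏ j, u j ^ k j * (Real.exp (-(lam j) * x) * (lam j * x) ^ (k j) / (Nat.factorial (k j) : ℝ))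
      with hG_def
    have hGcont : ∀ k, Continuous (G k) := by
      intro k
      apply continuous_finset_prod
      intro j _
      fun_prop
    have hGnonneg : ∀ k : Fin m → ℕ, ∀ x : ℝ, 0 ≤ x → 0 ≤ G k x := by
      intro k x hx
      apply Finset.prod_nonneg
      intro j _
      have h1 : (0:ℝ) ≤ u j := (hu j).1
      have h2 : (0:ℝ) ≤ lam j * x := mul_nonneg (hlam j).le hx
      positivity
    have hae : ∀ᵐ x ∂ν, 0 ≤ x := by
      rw [MeasureTheory.ae_iff]
      have : {x : ℝ | ¬ 0 ≤ x} = Set.Iio 0 := by ext x; simp [not_le]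
      rw [this]; exact hνsupp
    -- rewrite each summand
    have hsummand : ∀ k : Fin m → ℕ,
        (∏ j, u j ^ k j) *
          ∫ x, ∏ j, Real.exp (-(lam j) * x) * (lam j * x) ^ (k j) / (Nat.factorial (k j) : ℝ) ∂ν
        = ∫ x, G k x ∂ν := by
      intro k
      rw [← integral_const_mul]
      congr 1; ext x
      rw [hG_def, ← Finset.prod_mul_distrib]
    -- pointwise ENNReal factorization
    have hpt : ∀ x : ℝ, 0 ≤ x →
        ∑' k : Fin m → ℕ, ENNReal.ofReal (G k x) = ENNReal.ofReal (Real.exp (-c * x)) := by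
      intro x hx
      set h : Fin m → ℕ → ℝ := fun j n =>
        u j ^ n * (Real.exp (-(lam j) * x) * (lam j * x) ^ n / (Nat.factorial n : ℝ)) with hh_def
      have hh_nonneg : ∀ j n, 0 ≤ h j n := by
        intro j n
        have h1 : (0:ℝ) ≤ u j := (hu j).1
        have h2 : (0:ℝ) ≤ lam j * x := mul_nonneg (hlam j).le hx
        positivity
      have hh_eq : ∀ j n, h j n = Real.exp (-(lam j) * x) * ((u j * (lam j * x)) ^ n / (Nat.factorial n : ℝ)) := by
        intro j n; rw [hh_def]; ring
      have hh_summable : ∀ j, Summable (h j) := by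
        intro j
        have he : h j = fun n => Real.exp (-(lam j) * x) *
            ((u j * (lam j * x)) ^ n / (Nat.factorial n : ℝ)) := funext (hh_eq j)
        rw [he]
        exact (Real.summable_pow_div_factorial _).mul_left _
      have hh_tsum : ∀ j, ∑' n, h j n = Real.exp (-(lam j * (1 - u j)) * x) := by
        intro j
        simp_rw [hh_eq]
        rw [tsum_mul_left, exp_tsum_div, ← Real.exp_add]
        congr 1; ring
      have step1 : ∀ k : Fin m → ℕ, ENNReal.ofReal (G k x) = ∏ j, ENNReal.ofReal (h j (k j)) := by
        intro k
        rw [hG_def, ENNReal.ofReal_prod_of_nonneg (fun j _ => hh_nonneg j (k j))]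
      simp_rw [step1]
      rw [ennreal_tsum_pi_prod m (fun j n => ENNReal.ofReal (h j n))]
      have step2 : ∀ j : Fin m, ∑' n, ENNReal.ofReal (h j n) = ENNReal.ofReal (Real.exp (-(lam j * (1 - u j)) * x)) := by
        intro j
        rw [← ENNReal.ofReal_tsum_of_nonneg (hh_nonneg j) (hh_summable j), hh_tsum j]
      simp_rw [step2]
      rw [← ENNReal.ofReal_prod_of_nonneg (fun j _ => (Real.exp_nonneg _)), ← Real.exp_sum]
      have hsum : (∑ j : Fin m, -(lam j * (1 - u j)) * x) = -c * x := by
        rw [← Finset.sum_mul, Finset.sum_neg_distrib, hc_def]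
      rw [hsum]
    -- measurability
    have hGmeas : ∀ k : Fin m → ℕ, AEMeasurable (fun x => ENNReal.ofReal (G k x)) ν :=
      fun k => (ENNReal.continuous_ofReal.comp (hGcont k)).aemeasurable
    -- integrability of exp(-c x)
    have hint : Integrable (fun x : ℝ => Real.exp (-c * x)) ν := by
      apply Integrable.mono' (integrable_const (1:ℝ))
        ((by fun_prop : Continuous fun x : ℝ => Real.exp (-c * x)).aestronglyMeasurable)
      filter_upwards [hae] with x hx
      rw [Real.norm_eq_abs, abs_of_pos (Real.exp_pos _)]
      exact Real.exp_le_one_iff.mpr (mul_nonpos_of_nonpos_of_nonneg (neg_nonpos.mpr hc) hx)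
    -- total lintegral
    have hT : ∑' k : Fin m → ℕ, ∫⁻ x, ENNReal.ofReal (G k x) ∂ν
        = ENNReal.ofReal (Real.exp (-t * ((c + θ) ^ α - θ ^ α))) := by
      rw [← MeasureTheory.lintegral_tsum hGmeas]
      have : ∫⁻ x, ∑' k : Fin m → ℕ, ENNReal.ofReal (G k x) ∂ν
          = ∫⁻ x, ENNReal.ofReal (Real.exp (-c * x)) ∂ν := by
        apply lintegral_congr_ae
        filter_upwards [hae] with x hx
        exact hpt x hx
      rw [this, ← MeasureTheory.ofReal_integral_eq_lintegral_ofReal hint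
        (Filter.Eventually.of_forall fun x => (Real.exp_pos _).le), hLap c hc]
    have hne : ∀ k : Fin m → ℕ, ∫⁻ x, ENNReal.ofReal (G k x) ∂ν ≠ ⊤ := by
      intro k
      have hle : ∫⁻ x, ENNReal.ofReal (G k x) ∂ν
          ≤ ∑' k : Fin m → ℕ, ∫⁻ x, ENNReal.ofReal (G k x) ∂ν := ENNReal.le_tsum k
      rw [hT] at hle
      exact ne_top_of_le_ne_top ENNReal.ofReal_ne_top hle
    have hint_eq : ∀ k : Fin m → ℕ,
        ∫ x, G k x ∂ν = (∫⁻ x, ENNReal.ofReal (G k x) ∂ν).toReal := by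
      intro k
      apply MeasureTheory.integral_eq_lintegral_of_nonneg_ae
      · filter_upwards [hae] with x hx; exact hGnonneg k x hx
      · exact (hGcont k).aestronglyMeasurable
    calc (∑' k : Fin m → ℕ, (∏ j, u j ^ k j) *
          ∫ x, ∏ j, Real.exp (-(lam j) * x) * (lam j * x) ^ (k j) / (Nat.factorial (k j) : ℝ) ∂ν)
        = ∑' k : Fin m → ℕ, (∫⁻ x, ENNReal.ofReal (G k x) ∂ν).toReal := by
          congr 1; ext k; rw [hsummand k, hint_eq k]
      _ = (∑' k : Fin m → ℕ, ∫⁻ x, ENNReal.ofReal (G k x) ∂ν).toReal :=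
          (ENNReal.tsum_toReal_eq hne).symm
      _ = Real.exp (-t * ((c + θ) ^ α - θ ^ α)) := by
          rw [hT, ENNReal.toReal_ofReal (Real.exp_nonneg _)]
  · -- ODE
    intro s
    have h1 : HasDerivAt (fun r : ℝ => -r * ((c + θ) ^ α - θ ^ α))
        (-((c + θ) ^ α - θ ^ α)) s := by
      simpa using ((hasDerivAt_id s).neg.mul_const ((c + θ) ^ α - θ ^ α))
    simpa [mul_comm] using h1.exp
end

section
/- Let α ∈ (0,1), θ > 0, μ > 0, ρ > 0, t > 0 and λ_0, λ_1, λ_2 > 0, and let ν be a probability measure on [0,∞) satisfying ∫₀^∞ e^{−w x} dν(x) = (1 + μ^{−1}((w+θ)^α − θ^α))^{−ρt} for all w ≥ 0. Then for all u_1, u_2 ∈ [0,1], the joint probability generating function of the bivariate counting process N_1 = Q_1 + Q_0, N_2 = Q_2 + Q_0 satisfies Σ_{k_1, k_2, k_3 ∈ ℕ} u_1^{k_1+k_3} u_2^{k_2+k_3} ∫₀^∞ (e^{−λ_1 x}(λ_1 x)^{k_1}/k_1!)(e^{−λ_2 x}(λ_2 x)^{k_2}/k_2!)(e^{−λ_0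 x}(λ_0 x)^{k_3}/k_3!) dν(x) = (1 + μ^{−1}[(λ_1(1−u_1) + λ_2(1−u_2) + λ_0(1−u_1 u_2) + θ)^α − θ^α])^{−ρt}. -/
open MeasureTheory Real

private lemma real_exp_tsum (a : ℝ) : Real.exp a = ∑' n : ℕ, a ^ n / n.factorial := by
  rw [Real.exp_eq_exp_ℝ, NormedSpace.exp_eq_tsum_div]

private lemma summable_norm_pow_div (a : ℝ) :
    Summable fun n : ℕ => ‖a ^ n / n.factorial‖ := by
  refine (Real.summable_pow_div_factorial |a|).congr fun n => ?_
  simp [Real.norm_eq_abs, abs_div, abs_pow, Nat.abs_cast]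

private lemma triple_summable_norm (b c : ℝ) :
    Summable fun p : ℕ × ℕ => ‖(b ^ p.1 / p.1.factorial) * (c ^ p.2 / p.2.factorial)‖ := by
  have h := summable_mul_of_summable_norm (R := ℝ)
    (f := fun n : ℕ => ‖b ^ n / (n.factorial : ℝ)‖) (g := fun n : ℕ => ‖c ^ n / (n.factorial : ℝ)‖)
    ((summable_norm_pow_div b).congr fun n => (norm_norm _).symm)
    ((summable_norm_pow_div c).congr fun n => (norm_norm _).symm)
  exact h.congr fun p => (norm_mul _ _).symm

private lemma triple_summable (a b c : ℝ) :
    Summable fun k : ℕ × ℕ × ℕ =>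
      (a ^ k.1 / k.1.factorial) * ((b ^ k.2.1 / k.2.1.factorial) * (c ^ k.2.2 / k.2.2.factorial)) :=
  summable_mul_of_summable_norm (R := ℝ) (f := fun n : ℕ => a ^ n / (n.factorial : ℝ))
    (g := fun p : ℕ × ℕ => (b ^ p.1 / (p.1.factorial : ℝ)) * (c ^ p.2 / (p.2.factorial : ℝ)))
    (summable_norm_pow_div a) (triple_summable_norm b c)

private lemma triple_tsum (a b c : ℝ) :
    (∑' k : ℕ × ℕ × ℕ,
      (a ^ k.1 / k.1.factorial) * ((b ^ k.2.1 / k.2.1.factorial) * (c ^ k.2.2 / k.2.2.factorial)))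
      = Real.exp a * (Real.exp b * Real.exp c) := by
  rw [real_exp_tsum a, real_exp_tsum b, real_exp_tsum c,
    tsum_mul_tsum_of_summable_norm (summable_norm_pow_div b) (summable_norm_pow_div c)]
  exact (tsum_mul_tsum_of_summable_norm (R := ℝ) (f := fun n : ℕ => a ^ n / (n.factorial : ℝ))
    (g := fun p : ℕ × ℕ => (b ^ p.1 / (p.1.factorial : ℝ)) * (c ^ p.2 / (p.2.factorial : ℝ)))
    (summable_norm_pow_div a) (triple_summable_norm b c)).symm

/-- joint pgf of the bivariate counting process N₁ = Q₁ + Q₀, N₂ = Q₂ + Q₀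
driven by tempered space-fractional negative binomial components with a common random time. -/
theorem bivariate_counting_pgf
    {α θ μ ρ t : ℝ}
    (hα : α ∈ Set.Ioo (0:ℝ) 1) (hθ : 0 < θ) (hμ : 0 < μ) (hρ : 0 < ρ) (ht : 0 < t)
    {l0 l1 l2 : ℝ} (hl0 : 0 < l0) (hl1 : 0 < l1) (hl2 : 0 < l2)
    (ν : Measure ℝ) [IsProbabilityMeasure ν] (hνsupp : ν (Set.Iio 0) = 0)
    (hLap : ∀ w : ℝ, 0 ≤ w →
      ∫ x, Real.exp (-w * x) ∂ν
        = (1 + μ⁻¹ * ((w + θ) ^ α - θ ^ α)) ^ (-(ρ * t)))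
    (u1 u2 : ℝ) (hu1 : u1 ∈ Set.Icc (0:ℝ) 1) (hu2 : u2 ∈ Set.Icc (0:ℝ) 1) :
    (∑' k : ℕ × ℕ × ℕ, u1 ^ (k.1 + k.2.2) * u2 ^ (k.2.1 + k.2.2) *
        ∫ x, (Real.exp (-l1 * x) * (l1 * x) ^ k.1 / (Nat.factorial k.1 : ℝ)) *
          (Real.exp (-l2 * x) * (l2 * x) ^ k.2.1 / (Nat.factorial k.2.1 : ℝ)) *
          (Real.exp (-l0 * x) * (l0 * x) ^ k.2.2 / (Nat.factorial k.2.2 : ℝ)) ∂ν)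
      = (1 + μ⁻¹ * ((l1 * (1 - u1) + l2 * (1 - u2) + l0 * (1 - u1 * u2) + θ) ^ α - θ ^ α))
          ^ (-(ρ * t)) := by
  obtain ⟨hu1l, hu1r⟩ := hu1
  obtain ⟨hu2l, hu2r⟩ := hu2
  set w : ℝ := l1 * (1 - u1) + l2 * (1 - u2) + l0 * (1 - u1 * u2) with hw
  have hw0 : 0 ≤ w := by
    have h12 : u1 * u2 ≤ 1 := mul_le_one₀ hu1r hu2l hu2r
    have := mul_nonneg hl1.le (by linarith : (0:ℝ) ≤ 1 - u1)
    have := mul_nonneg hl2.le (by linarith : (0:ℝ) ≤ 1 - u2)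
    have := mul_nonneg hl0.le (by linarith : (0:ℝ) ≤ 1 - u1 * u2)
    positivity
  -- the family of integrands
  set g : ℕ × ℕ × ℕ → ℝ → ℝ := fun k x =>
    u1 ^ (k.1 + k.2.2) * u2 ^ (k.2.1 + k.2.2) *
      ((Real.exp (-l1 * x) * (l1 * x) ^ k.1 / (Nat.factorial k.1 : ℝ)) *
        (Real.exp (-l2 * x) * (l2 * x) ^ k.2.1 / (Nat.factorial k.2.1 : ℝ)) *
        (Real.exp (-l0 * x) * (l0 * x) ^ k.2.2 / (Nat.factorial k.2.2 : ℝ))) with hg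
  -- rewrite g k x in factored form
  have hgfact : ∀ k : ℕ × ℕ × ℕ, ∀ x : ℝ, g k x =
      (Real.exp (-l1 * x) * Real.exp (-l2 * x) * Real.exp (-l0 * x)) *
        (((u1 * (l1 * x)) ^ k.1 / k.1.factorial) *
          (((u2 * (l2 * x)) ^ k.2.1 / k.2.1.factorial) *
            ((u1 * u2 * (l0 * x)) ^ k.2.2 / k.2.2.factorial))) := by
    intro k x
    simp only [hg, mul_pow, pow_add]
    ring
  have hsum : ∀ x : ℝ, Summable (fun k => g k x) := by
    intro x
    have := (triple_summable (u1 * (l1 * x)) (u2 * (l2 * x)) (u1 * u2 * (l0 * x))).mul_left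
      (Real.exp (-l1 * x) * Real.exp (-l2 * x) * Real.exp (-l0 * x))
    exact this.congr fun k => (hgfact k x).symm
  have hpt : ∀ x : ℝ, (∑' k, g k x) = Real.exp (-w * x) := by
    intro x
    have : (fun k : ℕ × ℕ × ℕ => g k x) = fun k =>
        (Real.exp (-l1 * x) * Real.exp (-l2 * x) * Real.exp (-l0 * x)) *
          (((u1 * (l1 * x)) ^ k.1 / k.1.factorial) *
            (((u2 * (l2 * x)) ^ k.2.1 / k.2.1.factorial) *
              ((u1 * u2 * (l0 * x)) ^ k.2.2 / k.2.2.factorial))) := funext fun k => hgfact k x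
    rw [this, tsum_mul_left, triple_tsum, ← Real.exp_add, ← Real.exp_add, ← Real.exp_add,
      ← Real.exp_add, ← Real.exp_add]
    congr 1
    rw [hw]; ring
  have hmeas : ∀ k : ℕ × ℕ × ℕ, AEStronglyMeasurable (g k) ν := by
    intro k
    apply Continuous.aestronglyMeasurable
    fun_prop
  have hae : ∀ᵐ x ∂ν, 0 ≤ x := by
    rw [ae_iff]
    convert hνsupp using 2
    ext x; simp [Set.Iio]
  have hgnn : ∀ k : ℕ × ℕ × ℕ, ∀ x : ℝ, 0 ≤ x → 0 ≤ g k x := by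
    intro k x hx
    rw [hgfact]
    have h1 : 0 ≤ u1 * (l1 * x) := mul_nonneg hu1l (mul_nonneg hl1.le hx)
    have h2 : 0 ≤ u2 * (l2 * x) := mul_nonneg hu2l (mul_nonneg hl2.le hx)
    have h3 : 0 ≤ u1 * u2 * (l0 * x) := mul_nonneg (mul_nonneg hu1l hu2l) (mul_nonneg hl0.le hx)
    positivity
  have hfin : (∑' k : ℕ × ℕ × ℕ, ∫⁻ x, ‖g k x‖₊ ∂ν) ≠ ⊤ := by
    rw [← lintegral_tsum fun k => (hmeas k).nnnorm.aemeasurable.coe_nnreal_ennreal]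
    have hb : ∀ᵐ x ∂ν, (∑' k : ℕ × ℕ × ℕ, (‖g k x‖₊ : ENNReal)) ≤ 1 := by
      filter_upwards [hae] with x hx
      have heq : (∑' k : ℕ × ℕ × ℕ, (‖g k x‖₊ : ENNReal)) = ENNReal.ofReal (∑' k, g k x) := by
        rw [ENNReal.ofReal_tsum_of_nonneg (fun k => hgnn k x hx) (hsum x)]
        refine tsum_congr fun k => ?_
        rw [← enorm_eq_nnnorm, ← ofReal_norm, Real.norm_of_nonneg (hgnn k x hx)]
      rw [heq, hpt x]
      calc ENNReal.ofReal (Real.exp (-w * x)) ≤ ENNReal.ofReal 1 := by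
            apply ENNReal.ofReal_le_ofReal
            rw [← Real.exp_zero]
            apply Real.exp_le_exp.2
            have : 0 ≤ w * x := mul_nonneg hw0 hx
            linarith
        _ = 1 := ENNReal.ofReal_one
    have hle : ∫⁻ x, (∑' k : ℕ × ℕ × ℕ, (‖g k x‖₊ : ENNReal)) ∂ν ≤ 1 :=
      le_trans (lintegral_mono_ae hb) (by simp)
    exact ne_top_of_le_ne_top ENNReal.one_ne_top hle
  have hstep : (∑' k : ℕ × ℕ × ℕ, u1 ^ (k.1 + k.2.2) * u2 ^ (k.2.1 + k.2.2) *
        ∫ x, (Real.exp (-l1 * x) * (l1 * x) ^ k.1 / (Nat.factorial k.1 : ℝ)) *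
          (Real.exp (-l2 * x) * (l2 * x) ^ k.2.1 / (Nat.factorial k.2.1 : ℝ)) *
          (Real.exp (-l0 * x) * (l0 * x) ^ k.2.2 / (Nat.factorial k.2.2 : ℝ)) ∂ν)
      = ∑' k : ℕ × ℕ × ℕ, ∫ x, g k x ∂ν := by
    refine tsum_congr fun k => ?_
    rw [← integral_const_mul]
  rw [hstep, ← integral_tsum hmeas hfin]
  have : (∫ x, (∑' k, g k x) ∂ν) = ∫ x, Real.exp (-w * x) ∂ν :=
    integral_congr_ae (Filter.Eventually.of_forall fun x => hpt x)
  rw [this, hLap w hw0]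
end

section
/- Let α ∈ (0,1), θ > 0, μ > 0, ρ > 0, t > 0 and λ_0, λ_1, λ_2 > 0 with λ = λ_0 + λ_1 + λ_2. On a probability space (Ω, 𝔽, P), let Q : Ω → ℕ and (b_i)_{i ≥ 1} : Ω → {0, 1, 2} be such that Q together with all the b_i are mutually independent, each b_i has distribution P(b_i = 1) = λ_1/λ, P(b_i = 2) = λ_2/λ, P(b_i = 0) = λ_0/λ, and Q satisfies E[u^Q] = (1 + μ^{−1}((λ(1−u) + θ)^α − θ^α))^{−ρt} for all u ∈ [0,1]. Define H_1 = Σ_{i=1}^{Q} (1[b_i = 1] + 1[b_i = 0]) and H_2 = Σ_{i=1}^{Q} (1[b_i = 2] + 1[b_i = 0]). Then for all u_1, u_2 ∈ [0,1], E[u_1^{H_1} u_2^{H_2}] = (1 + μ^{−1}[(λ_1(1−u_1) + λ_2(1−u_2) + λ_0(1−u_1 u_2) + θ)^α − θ^α])^{−ρt}. -/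
set_option maxHeartbeats 1000000

open MeasureTheory Real ProbabilityTheory

/-- the bivariate counting process (N₁, N₂) = (Q₁+Q₀, Q₂+Q₀) and the
multinomially marked single-count pair (H₁, H₂) have the same joint pgf. -/
theorem marked_pair_pgf
    {Ω : Type*} [MeasurableSpace Ω] (P : Measure Ω) [IsProbabilityMeasure P]
    {α θ μ ρ t : ℝ}
    (hα : α ∈ Set.Ioo (0:ℝ) 1) (hθ : 0 < θ) (hμ : 0 < μ) (hρ : 0 < ρ) (ht : 0 < t)
    {l0 l1 l2 lam : ℝ} (hl0 : 0 < l0) (hl1 : 0 < l1) (hl2 : 0 < l2)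
    (hlam : lam = l0 + l1 + l2)
    (Q : Ω → ℕ) (b : ℕ → Ω → ℕ)
    (hQmeas : Measurable Q) (hbmeas : ∀ i, Measurable (b i))
    -- Q together with all the b_i are mutually independent
    (hindep : iIndepFun
      (fun i : Option ℕ => Option.elim i Q b) P)
    -- each b_i has the multinomial mark distribution
    (hb1 : ∀ i, P {ω | b i ω = 1} = ENNReal.ofReal (l1 / lam))
    (hb2 : ∀ i, P {ω | b i ω = 2} = ENNReal.ofReal (l2 / lam))
    (hb0 : ∀ i, P {ω | b i ω = 0} = ENNReal.ofReal (l0 / lam))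
    -- Q is a tempered space-fractional negative binomial count: its pgf
    (hQpgf : ∀ u : ℝ, u ∈ Set.Icc (0:ℝ) 1 →
      ∫ ω, u ^ Q ω ∂P = (1 + μ⁻¹ * ((lam * (1 - u) + θ) ^ α - θ ^ α)) ^ (-(ρ * t))) :
    ∀ u1 u2 : ℝ, u1 ∈ Set.Icc (0:ℝ) 1 → u2 ∈ Set.Icc (0:ℝ) 1 →
      ∫ ω, u1 ^ (∑ i ∈ Finset.range (Q ω),
            ((if b i ω = 1 then 1 else 0) + (if b i ω = 0 then 1 else 0))) *
          u2 ^ (∑ i ∈ Finset.range (Q ω),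
            ((if b i ω = 2 then 1 else 0) + (if b i ω = 0 then 1 else 0))) ∂P
        = (1 + μ⁻¹ * ((l1 * (1 - u1) + l2 * (1 - u2) + l0 * (1 - u1 * u2) + θ) ^ α - θ ^ α))
            ^ (-(ρ * t)) := by
  classical
  intro u1 u2 hu1 hu2
  obtain ⟨hu10, hu11⟩ := hu1
  obtain ⟨hu20, hu21⟩ := hu2
  have hlam0 : 0 < lam := by rw [hlam]; linarith
  -- the per-mark weight
  set g : ℕ → ℝ := fun k =>
    u1 ^ ((if k = 1 then 1 else 0) + (if k = 0 then 1 else 0)) *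
    u2 ^ ((if k = 2 then 1 else 0) + (if k = 0 then 1 else 0)) with hgdef
  have hg0 : ∀ k, 0 ≤ g k := by
    intro k
    exact mul_nonneg (pow_nonneg hu10 _) (pow_nonneg hu20 _)
  have hg1 : ∀ k, g k ≤ 1 := by
    intro k
    have h1 : u1 ^ ((if k = 1 then 1 else 0) + (if k = 0 then 1 else 0)) ≤ 1 :=
      pow_le_one₀ hu10 hu11
    have h2 : u2 ^ ((if k = 2 then 1 else 0) + (if k = 0 then 1 else 0)) ≤ 1 :=
      pow_le_one₀ hu20 hu21
    calc g k ≤ 1 * 1 := mul_le_mul h1 h2 (pow_nonneg hu20 _) (by norm_num)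
    _ = 1 := by norm_num
  -- explicit formula for g splitting on the values of k
  have hgsplit : ∀ k : ℕ, g k = 1 + (u1 - 1) * (if k = 1 then 1 else 0)
      + (u2 - 1) * (if k = 2 then 1 else 0) + (u1 * u2 - 1) * (if k = 0 then 1 else 0) := by
    intro k
    rcases k with _ | _ | _ | k <;> simp [hgdef] <;> ring
  set v : ℝ := (l1 * u1 + l2 * u2 + l0 * (u1 * u2)) / lam with hvdef
  have hv0 : 0 ≤ v := by positivity
  have hv1 : v ≤ 1 := by
    have h12 : u1 * u2 ≤ 1 := by nlinarith
    rw [hvdef, div_le_one hlam0, hlam]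
    nlinarith [mul_le_of_le_one_right hl1.le hu11, mul_le_of_le_one_right hl2.le hu21,
      mul_le_of_le_one_right hl0.le h12]
  -- the partial products
  set F : ℕ → Ω → ℝ := fun n ω => ∏ i ∈ Finset.range n, g (b i ω) with hFdef
  have hFmeas : ∀ n, Measurable (F n) := by
    intro n
    exact Finset.measurable_prod _ fun i _ => (measurable_of_countable g).comp (hbmeas i)
  have hF0 : ∀ n ω, 0 ≤ F n ω := fun n ω => Finset.prod_nonneg fun i _ => hg0 _
  have hF1 : ∀ n ω, F n ω ≤ 1 := fun n ω =>
    Finset.prod_le_one (fun i _ => hg0 _) (fun i _ => hg1 _)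
  -- expectation of each mark weight
  have hEg : ∀ i, ∫ ω, g (b i ω) ∂P = v := by
    intro i
    have hind : ∀ k : ℕ, (∫ ω, (if b i ω = k then (1:ℝ) else 0) ∂P)
        = (P {ω | b i ω = k}).toReal := by
      intro k
      have : (fun ω => (if b i ω = k then (1:ℝ) else 0)) = ({ω | b i ω = k}).indicator 1 := by
        funext ω; by_cases h : b i ω = k <;> simp [Set.indicator_apply, h]
      have hms : MeasurableSet {ω | b i ω = k} := hbmeas i (measurableSet_singleton k)
      rw [this, integral_indicator_one hms]; rfl
    have hint : ∀ k : ℕ, Integrable (fun ω => (if b i ω = k then (1:ℝ) else 0)) P := by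
      intro k
      have : (fun ω => (if b i ω = k then (1:ℝ) else 0)) = ({ω | b i ω = k}).indicator 1 := by
        funext ω; by_cases h : b i ω = k <;> simp [Set.indicator_apply, h]
      rw [this]
      have hms : MeasurableSet {ω | b i ω = k} := hbmeas i (measurableSet_singleton k)
      exact (integrable_const 1).indicator hms
    have heq : (fun ω => g (b i ω)) = fun ω =>
        1 + (u1 - 1) * (if b i ω = 1 then (1:ℝ) else 0)
          + (u2 - 1) * (if b i ω = 2 then (1:ℝ) else 0)
          + (u1 * u2 - 1) * (if b i ω = 0 then (1:ℝ) else 0) := by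
      funext ω
      rw [hgsplit (b i ω)]
    rw [heq]
    have I1 := (hint 1).const_mul (u1 - 1)
    have I2 := (hint 2).const_mul (u2 - 1)
    have I0 := (hint 0).const_mul (u1 * u2 - 1)
    have J1 : Integrable (fun ω => 1 + (u1 - 1) * (if b i ω = 1 then (1:ℝ) else 0)) P :=
      (integrable_const 1).add I1
    have J2 : Integrable (fun ω => 1 + (u1 - 1) * (if b i ω = 1 then (1:ℝ) else 0)
        + (u2 - 1) * (if b i ω = 2 then (1:ℝ) else 0)) P := J1.add I2
    rw [integral_add J2 I0, integral_add J1 I2, integral_add (integrable_const 1) I1]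
    rw [integral_const, integral_const_mul, integral_const_mul, integral_const_mul,
      hind 1, hind 2, hind 0, hb1 i, hb2 i, hb0 i,
      ENNReal.toReal_ofReal (by positivity), ENNReal.toReal_ofReal (by positivity),
      ENNReal.toReal_ofReal (by positivity)]
    simp only [smul_eq_mul, mul_one, probReal_univ]
    rw [hvdef]
    field_simp
    rw [hlam]
    ring
  -- the integral calculation for a fixed n
  have key : ∀ n : ℕ,
      (∫ ω, (if Q ω = n then (1:ℝ) else 0) * F n ω ∂P)
        = (P (Q ⁻¹' {n})).toReal * v ^ n := by
    intro n
    -- real-valued independent family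
    set φ : (j : Option ℕ) → ℕ → ℝ :=
      fun j => Option.elim j (fun k => if k = n then (1:ℝ) else 0) (fun _ => g) with hφdef
    have hY : iIndepFun
        (fun j : Option ℕ => φ j ∘ Option.elim j Q b) P :=
      hindep.comp φ (fun j => measurable_of_countable _)
    set Y : Option ℕ → Ω → ℝ := fun j => φ j ∘ Option.elim j Q b with hYdef
    have hYmeas : ∀ j, Measurable (Y j) := by
      rintro (_ | i)
      · exact (measurable_of_countable _).comp hQmeas
      · exact (measurable_of_countable _).comp (hbmeas i)
    -- products over the image of `some`
    have hprod : ∀ m : ℕ, (∏ j ∈ (Finset.range m).image Option.some, Y j) = F m := by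
      intro m
      rw [Finset.prod_image (fun x _ y _ h => Option.some_injective ℕ h)]
      funext ω
      rw [Finset.prod_apply]
      rfl
    -- expectation of partial products
    have hEF : ∀ m : ℕ, ∫ ω, F m ω ∂P = v ^ m := by
      intro m
      induction m with
      | zero => simp [hFdef]
      | succ m ih =>
        have hnot : Option.some m ∉ (Finset.range m).image Option.some := by
          simp
        have hI : IndepFun (F m) (Y (Option.some m)) P := by
          have := hY.indepFun_finsetProd_of_notMem hYmeas hnot
          rwa [hprod m] at this
        have : (fun ω => F (m + 1) ω) = fun ω => F m ω * Y (Option.some m) ω := by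
          funext ω
          exact Finset.prod_range_succ _ _
        calc ∫ ω, F (m + 1) ω ∂P = ∫ ω, F m ω * Y (Option.some m) ω ∂P := by rw [this]
        _ = (∫ ω, F m ω ∂P) * ∫ ω, Y (Option.some m) ω ∂P :=
            hI.integral_fun_mul_eq_mul_integral (hFmeas m).aestronglyMeasurable
              (hYmeas _).aestronglyMeasurable
        _ = v ^ m * v := by
            have hYg : (fun ω => Y (Option.some m) ω) = fun ω => g (b m ω) := rfl
            rw [ih, hYg, hEg m]
        _ = v ^ (m + 1) := by ring
    -- independence of the indicator of {Q = n} from F n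
    have hnone : Option.none ∉ (Finset.range n).image Option.some := by simp
    have hI : IndepFun (F n) (Y Option.none) P := by
      have := hY.indepFun_finsetProd_of_notMem hYmeas hnone
      rwa [hprod n] at this
    have hswap : (fun ω => (if Q ω = n then (1:ℝ) else 0) * F n ω)
        = fun ω => F n ω * Y Option.none ω := by
      funext ω
      simp only [hYdef, hφdef, Function.comp_apply, Option.elim]
      ring
    rw [hswap, hI.integral_fun_mul_eq_mul_integral (hFmeas n).aestronglyMeasurable
      (hYmeas _).aestronglyMeasurable, hEF n]
    have : ∫ ω, Y Option.none ω ∂P = (P (Q ⁻¹' {n})).toReal := by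
      have : Y Option.none = (Q ⁻¹' {n}).indicator 1 := by
        funext ω
        by_cases h : Q ω = n <;>
          simp [hYdef, hφdef, Set.indicator_apply, Option.elim, h]
      rw [this, integral_indicator_one (hQmeas (measurableSet_singleton n))]; rfl
    rw [this]
    ring
  -- the countable partition by the value of Q
  set A : ℕ → Set Ω := fun n => Q ⁻¹' {n} with hAdef
  have hAmeas : ∀ n, MeasurableSet (A n) := fun n => hQmeas (measurableSet_singleton n)
  have hAdisj : Pairwise (Function.onFun Disjoint A) := by
    intro m n hmn
    simp only [Function.onFun, hAdef, Set.disjoint_left]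
    intro ω hm hn
    exact hmn (by rw [← hm, ← hn] <;> simp_all [Set.mem_preimage])
  have hAunion : (⋃ n, A n) = Set.univ := by
    ext ω; simp [hAdef]
  -- decomposition of the integral of a bounded measurable function
  have hpart : ∀ f : Ω → ℝ, Measurable f → (∀ ω, ‖f ω‖ ≤ 1) →
      ∫ ω, f ω ∂P = ∑' n, ∫ ω in A n, f ω ∂P := by
    intro f hfm hfb
    have hfint : Integrable f P :=
      (integrable_const (1:ℝ)).mono' hfm.aestronglyMeasurable
        (Filter.Eventually.of_forall fun ω => by simpa using hfb ω)
    have := integral_iUnion hAmeas hAdisj (hfint.integrableOn (s := ⋃ n, A n))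
    rw [hAunion, setIntegral_univ] at this
    exact this
  -- LHS function
  set f : Ω → ℝ := fun ω => F (Q ω) ω with hfdef
  have hfmeas : Measurable f := by
    have huncurry : Measurable (fun p : Ω × ℕ => F p.2 p.1) :=
      measurable_from_prod_countable_left fun n => hFmeas n
    exact huncurry.comp (measurable_id.prodMk hQmeas)
  have hfb : ∀ ω, ‖f ω‖ ≤ 1 := by
    intro ω
    rw [Real.norm_eq_abs, abs_le]
    exact ⟨by linarith [hF0 (Q ω) ω], hF1 (Q ω) ω⟩
  -- pgf of Q at v
  have hvQmeas : Measurable (fun ω => v ^ Q ω) :=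
    (measurable_of_countable (fun n => v ^ n)).comp hQmeas
  have hvQb : ∀ ω, ‖v ^ Q ω‖ ≤ 1 := by
    intro ω
    rw [Real.norm_eq_abs, abs_le]
    constructor
    · have := pow_nonneg hv0 (Q ω); linarith
    · exact pow_le_one₀ hv0 hv1
  -- identify both integrals with the same tsum
  have hLHS : ∫ ω, f ω ∂P = ∑' n, (P (A n)).toReal * v ^ n := by
    rw [hpart f hfmeas hfb]
    congr 1
    funext n
    have hEq : Set.EqOn f (F n) (A n) := by
      intro ω hω
      have : Q ω = n := hω
      simp [hfdef, this]
    rw [setIntegral_congr_fun (hAmeas n) hEq, ← integral_indicator (hAmeas n)]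
    have : (A n).indicator (F n) = fun ω => (if Q ω = n then (1:ℝ) else 0) * F n ω := by
      funext ω
      simp only [Set.indicator_apply, hAdef, Set.mem_preimage, Set.mem_singleton_iff]
      by_cases h : Q ω = n <;> simp [h]
    rw [this, key n]
  have hRHS : ∫ ω, v ^ Q ω ∂P = ∑' n, (P (A n)).toReal * v ^ n := by
    rw [hpart _ hvQmeas hvQb]
    congr 1
    funext n
    have hEq : Set.EqOn (fun ω => v ^ Q ω) (fun _ => v ^ n) (A n) := by
      intro ω hω
      have : Q ω = n := hω
      simp [this]
    rw [setIntegral_congr_fun (hAmeas n) hEq, setIntegral_const, smul_eq_mul]; rfl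
  -- the integrand in the goal equals f
  have hgoal_fun : (fun ω => u1 ^ (∑ i ∈ Finset.range (Q ω),
        ((if b i ω = 1 then 1 else 0) + (if b i ω = 0 then 1 else 0))) *
      u2 ^ (∑ i ∈ Finset.range (Q ω),
        ((if b i ω = 2 then 1 else 0) + (if b i ω = 0 then 1 else 0)))) = f := by
    funext ω
    rw [hfdef]
    simp only [hFdef, hgdef]
    rw [← Finset.prod_pow_eq_pow_sum, ← Finset.prod_pow_eq_pow_sum,
      ← Finset.prod_mul_distrib]
  -- the argument identity
  have harg : lam * (1 - v) = l1 * (1 - u1) + l2 * (1 - u2) + l0 * (1 - u1 * u2) := by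
    rw [hvdef]
    field_simp
    rw [hlam]
    ring
  calc ∫ ω, u1 ^ (∑ i ∈ Finset.range (Q ω),
        ((if b i ω = 1 then 1 else 0) + (if b i ω = 0 then 1 else 0))) *
      u2 ^ (∑ i ∈ Finset.range (Q ω),
        ((if b i ω = 2 then 1 else 0) + (if b i ω = 0 then 1 else 0))) ∂P
      = ∫ ω, f ω ∂P := by rw [hgoal_fun]
  _ = ∫ ω, v ^ Q ω ∂P := by rw [hLHS, hRHS]
  _ = (1 + μ⁻¹ * ((lam * (1 - v) + θ) ^ α - θ ^ α)) ^ (-(ρ * t)) := hQpgf v ⟨hv0, hv1⟩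
  _ = (1 + μ⁻¹ * ((l1 * (1 - u1) + l2 * (1 - u2) + l0 * (1 - u1 * u2) + θ) ^ α - θ ^ α))
        ^ (-(ρ * t)) := by rw [harg]
end

section
/- Let α ∈ (0,1), θ > 0, μ > 0, ρ > 0, t > 0 and λ_0, λ_1, λ_2 > 0 with λ = λ_0 + λ_1 + λ_2. On a probability space (Ω, 𝔽, P), let Q : Ω → ℕ, (b_i)_{i ≥ 1} : Ω → {0,1,2}, (ξ_{1,i})_{i ≥ 1}, (ξ_{2,i})_{i ≥ 1} : Ω → [0,∞) and ((ξ_{3,i}, ξ_{4,i}))_{i ≥ 1} : Ω → [0,∞)² be such that Q, the sequence (b_i), and the three claim sequences are all mutually independent, the b_i are i.i.d. with P(b_i = 1) = λ_1/λ, P(b_i = 2) = λ_2/λ, P(b_i = 0) = λ_0/λ, the ξ_{1,i} are i.i.d., the ξ_{2,i} are i.i.d., the pairs (ξ_{3,i}, ξ_{4,i}) are i.i.d., and Q satisfies E[u^Q] = (1 + μ^{−1}((λ(1−u)+θ)^α − θ^α))^{−ρt} for all u ∈ [0,1]. Define S_3 = Σ_{i=1}^{Q} (1[b_i = 1] ξ_{1,i}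 + 1[b_i = 0] ξ_{3,i}) and S_4 = Σ_{i=1}^{Q} (1[b_i = 2] ξ_{2,i} + 1[b_i = 0] ξ_{4,i}). Then for all u_1, u_2 ∈ (0,1], E[u_1^{S_3} u_2^{S_4}] = (1 + μ^{−1}[(λ_1(1 − E[u_1^{ξ_{1,1}}]) + λ_2(1 − E[u_2^{ξ_{2,1}}]) + λ_0(1 − E[u_1^{ξ_{3,1}} u_2^{ξ_{4,1}}]) + θ)^α − θ^α])^{−ρt}. -/
open MeasureTheory Real ProbabilityTheory
open scoped ENNReal NNReal

set_option linter.unusedSectionVars false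
set_option maxHeartbeats 1000000

section Helpers
variable {Ω : Type*} [MeasurableSpace Ω] {P : Measure Ω} [IsProbabilityMeasure P]

lemma my_indep_mono {m1 m2 m1' m2' : MeasurableSpace Ω}
    (h : Indep m1 m2 P) (h1 : m1' ≤ m1) (h2 : m2' ≤ m2) : Indep m1' m2' P := by
  rw [Indep_iff] at h ⊢
  exact fun t1 t2 ht1 ht2 => h t1 t2 (h1 _ ht1) (h2 _ ht2)

lemma my_indepFun_of_indep {β γ : Type*} [mβ : MeasurableSpace β] [mγ : MeasurableSpace γ]
    {m1 m2 : MeasurableSpace Ω} {g : Ω → β} {h : Ω → γ}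
    (hInd : Indep m1 m2 P) (hg : Measurable[m1] g) (hh : Measurable[m2] h) :
    IndepFun g h P := by
  rw [IndepFun_iff]
  have h1 : MeasurableSpace.comap g mβ ≤ m1 := measurable_iff_comap_le.1 hg
  have h2 : MeasurableSpace.comap h mγ ≤ m2 := measurable_iff_comap_le.1 hh
  rw [Indep_iff] at hInd
  exact fun t1 t2 ht1 ht2 => hInd t1 t2 (h1 _ ht1) (h2 _ ht2)

lemma my_rpow_sum {u : ℝ} (hu : 0 < u) {ι : Type*} (s : Finset ι) (f : ι → ℝ) :
    u ^ (∑ i ∈ s, f i) = ∏ i ∈ s, u ^ f i := by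
  classical
  induction s using Finset.induction_on with
  | empty => simp
  | insert a s hx ih => simp [Finset.sum_insert hx, Finset.prod_insert hx,
      Real.rpow_add hu, ih]

lemma my_integrable_of_le_one {f : Ω → ℝ} (hf : AEStronglyMeasurable f P)
    (h0 : ∀ ω, 0 ≤ f ω) (h1 : ∀ ω, f ω ≤ 1) : Integrable f P :=
  (integrable_const (1:ℝ)).mono' hf (Filter.Eventually.of_forall fun ω => by
    rw [Real.norm_eq_abs, abs_of_nonneg (h0 ω)]; exact h1 ω)

lemma my_measurable_rpow {u : ℝ} (hu : 0 < u) : Measurable fun x : ℝ => u ^ x := by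
  have h : (fun x : ℝ => u ^ x) = fun x => Real.exp (Real.log u * x) :=
    funext fun x => Real.rpow_def_of_pos hu x
  rw [h]; exact Real.measurable_exp.comp (measurable_id.const_mul _)

lemma my_integral_ite_one {g : Ω → ℕ} (hg : Measurable g) (n : ℕ) :
    ∫ ω, (if g ω = n then (1:ℝ) else 0) ∂P = (P {ω | g ω = n}).toReal := by
  have h : (fun ω => if g ω = n then (1:ℝ) else 0)
      = Set.indicator {ω | g ω = n} (fun _ => (1:ℝ)) :=
    funext fun ω => by by_cases h : g ω = n <;> simp [Set.indicator_apply, h]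
  have hset : MeasurableSet {ω | g ω = n} := hg (measurableSet_singleton n)
  rw [h]
  simpa [Measure.real] using integral_indicator_const (1:ℝ) hset

end Helpers


/-- Index type for the family consisting of the count Q, the marks b_i, and the three
claim sequences ξ₁, ξ₂ and (ξ₃, ξ₄). -/
abbrev RiskIdx : Type := Option (ℕ ⊕ ℕ ⊕ ℕ ⊕ ℕ)

/-- Codomain of each member of the family. -/
def riskType : RiskIdx → Type
  | none => ℕ
  | some (Sum.inl _) => ℕ
  | some (Sum.inr (Sum.inl _)) => ℝ
  | some (Sum.inr (Sum.inr (Sum.inl _))) => ℝ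
  | some (Sum.inr (Sum.inr (Sum.inr _))) => ℝ × ℝ

/-- The family of random variables Q, b_i, ξ_{1,i}, ξ_{2,i}, (ξ_{3,i}, ξ_{4,i}). -/
def riskFam {Ω : Type*} (Q : Ω → ℕ) (b : ℕ → Ω → ℕ) (ξ1 ξ2 : ℕ → Ω → ℝ)
    (ξ34 : ℕ → Ω → ℝ × ℝ) : (i : RiskIdx) → Ω → riskType i
  | none => Q
  | some (Sum.inl i) => b i
  | some (Sum.inr (Sum.inl i)) => ξ1 i
  | some (Sum.inr (Sum.inr (Sum.inl i))) => ξ2 i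
  | some (Sum.inr (Sum.inr (Sum.inr i))) => ξ34 i

/-- The measurable-space structure on each codomain. -/
def riskMS : (i : RiskIdx) → MeasurableSpace (riskType i)
  | none => inferInstanceAs (MeasurableSpace ℕ)
  | some (Sum.inl _) => inferInstanceAs (MeasurableSpace ℕ)
  | some (Sum.inr (Sum.inl _)) => inferInstanceAs (MeasurableSpace ℝ)
  | some (Sum.inr (Sum.inr (Sum.inl _))) => inferInstanceAs (MeasurableSpace ℝ)
  | some (Sum.inr (Sum.inr (Sum.inr _))) => inferInstanceAs (MeasurableSpace (ℝ × ℝ))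

/-- column index of a member of the family -/
def myCix : RiskIdx → ℕ
  | none => 0
  | some (Sum.inl i) => i
  | some (Sum.inr (Sum.inl i)) => i
  | some (Sum.inr (Sum.inr (Sum.inl i))) => i
  | some (Sum.inr (Sum.inr (Sum.inr i))) => i

/-- joint pgf of the compound pair (S₃, S₄) built from a single tempered
space-fractional negative binomial count with multinomial marks. -/
theorem compound_pair_pgf
    {Ω : Type*} [MeasurableSpace Ω] (P : Measure Ω) [IsProbabilityMeasure P]
    {α θ μ ρ t : ℝ}
    (hα : α ∈ Set.Ioo (0:ℝ) 1) (hθ : 0 < θ) (hμ : 0 < μ) (hρ : 0 < ρ) (ht : 0 < t)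
    {l0 l1 l2 lam : ℝ} (hl0 : 0 < l0) (hl1 : 0 < l1) (hl2 : 0 < l2)
    (hlam : lam = l0 + l1 + l2)
    (Q : Ω → ℕ) (b : ℕ → Ω → ℕ) (ξ1 ξ2 : ℕ → Ω → ℝ) (ξ34 : ℕ → Ω → ℝ × ℝ)
    (hQmeas : Measurable Q) (hbmeas : ∀ i, Measurable (b i))
    (hξ1meas : ∀ i, Measurable (ξ1 i)) (hξ2meas : ∀ i, Measurable (ξ2 i))
    (hξ34meas : ∀ i, Measurable (ξ34 i))
    -- the claims take values in [0, ∞)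
    (hξ1pos : ∀ i ω, 0 ≤ ξ1 i ω) (hξ2pos : ∀ i ω, 0 ≤ ξ2 i ω)
    (hξ34pos : ∀ i ω, 0 ≤ (ξ34 i ω).1 ∧ 0 ≤ (ξ34 i ω).2)
    -- Q, the marks and the three claim sequences are all mutually independent
    (hindep : iIndepFun (m := riskMS) (riskFam Q b ξ1 ξ2 ξ34) P)
    -- the marks b_i are identically distributed with the multinomial law
    (hb1 : ∀ i, P {ω | b i ω = 1} = ENNReal.ofReal (l1 / lam))
    (hb2 : ∀ i, P {ω | b i ω = 2} = ENNReal.ofReal (l2 / lam))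
    (hb0 : ∀ i, P {ω | b i ω = 0} = ENNReal.ofReal (l0 / lam))
    -- the claim sequences are identically distributed
    (hξ1id : ∀ i, IdentDistrib (ξ1 i) (ξ1 0) P P)
    (hξ2id : ∀ i, IdentDistrib (ξ2 i) (ξ2 0) P P)
    (hξ34id : ∀ i, IdentDistrib (ξ34 i) (ξ34 0) P P)
    -- Q is a tempered space-fractional negative binomial count: its pgf
    (hQpgf : ∀ u : ℝ, u ∈ Set.Icc (0:ℝ) 1 →
      ∫ ω, u ^ Q ω ∂P = (1 + μ⁻¹ * ((lam * (1 - u) + θ) ^ α - θ ^ α)) ^ (-(ρ * t))) :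
    ∀ u1 u2 : ℝ, u1 ∈ Set.Ioc (0:ℝ) 1 → u2 ∈ Set.Ioc (0:ℝ) 1 →
      ∫ ω, u1 ^ (∑ i ∈ Finset.range (Q ω),
            ((if b i ω = 1 then ξ1 i ω else 0) + (if b i ω = 0 then (ξ34 i ω).1 else 0))) *
          u2 ^ (∑ i ∈ Finset.range (Q ω),
            ((if b i ω = 2 then ξ2 i ω else 0) + (if b i ω = 0 then (ξ34 i ω).2 else 0))) ∂P
        = (1 + μ⁻¹ * ((l1 * (1 - ∫ ω, u1 ^ ξ1 0 ω ∂P)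
              + l2 * (1 - ∫ ω, u2 ^ ξ2 0 ω ∂P)
              + l0 * (1 - ∫ ω, u1 ^ (ξ34 0 ω).1 * u2 ^ (ξ34 0 ω).2 ∂P)
              + θ) ^ α - θ ^ α)) ^ (-(ρ * t)) := by

  intro u1 u2 hu1 hu2
  obtain ⟨hu1p, hu1le⟩ := hu1
  obtain ⟨hu2p, hu2le⟩ := hu2
  classical
  have hlam0 : (0:ℝ) < lam := by rw [hlam]; linarith
  -- measurability of the whole family
  have hfmeas : ∀ i, @Measurable Ω (riskType i) _ (riskMS i) (riskFam Q b ξ1 ξ2 ξ34 i) := by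
    rintro (_ | (i | i | i | i))
    exacts [hQmeas, hbmeas i, hξ1meas i, hξ2meas i, hξ34meas i]
  set m : RiskIdx → MeasurableSpace Ω :=
    fun j => (riskMS j).comap (riskFam Q b ξ1 ξ2 ξ34 j) with hm
  have h_le : ∀ j, m j ≤ (inferInstance : MeasurableSpace Ω) := fun j => (hfmeas j).comap_le
  have hiI : iIndep m P := hindep.iIndep
  -- grouped sigma-algebras
  set mc : ℕ → MeasurableSpace Ω :=
    fun i => ⨆ j ∈ {j : RiskIdx | j ≠ none ∧ myCix j = i}, m j with hmc
  set mt : ℕ → MeasurableSpace Ω :=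
    fun n => ⨆ j ∈ {j : RiskIdx | j ≠ none ∧ myCix j < n}, m j with hmt
  set mq : Unit → MeasurableSpace Ω := fun _ => ⨆ j ∈ ({none} : Set RiskIdx), m j with hmq
  have hIndQn : ∀ n : ℕ, Indep (mq ()) (mt n) P := fun n =>
    indep_iSup_of_disjoint h_le hiI (by
      rw [Set.disjoint_left]
      rintro j hj ⟨hne, -⟩
      exact hne hj)
  have hIndTn : ∀ n : ℕ, Indep (mt n) (mc n) P := fun n =>
    indep_iSup_of_disjoint h_le hiI (by
      rw [Set.disjoint_left]
      rintro j ⟨-, hlt⟩ ⟨-, heq⟩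
      exact absurd (heq ▸ hlt) (lt_irrefl n))
  -- measurability of coordinates w.r.t. their column sigma-algebra
  have hbc : ∀ i, Measurable[mc i] (b i) := by
    intro i
    have h1 : Measurable[m (some (Sum.inl i))] (b i) := Measurable.of_comap_le le_rfl
    exact h1.mono (le_iSup₂ (f := fun j _ => m j) (some (Sum.inl i))
      ⟨Option.some_ne_none _, rfl⟩) le_rfl
  have hx1c : ∀ i, Measurable[mc i] (ξ1 i) := by
    intro i
    have h1 : Measurable[m (some (Sum.inr (Sum.inl i)))] (ξ1 i) := Measurable.of_comap_le le_rfl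
    exact h1.mono (le_iSup₂ (f := fun j _ => m j) (some (Sum.inr (Sum.inl i)))
      ⟨Option.some_ne_none _, rfl⟩) le_rfl
  have hx2c : ∀ i, Measurable[mc i] (ξ2 i) := by
    intro i
    have h1 : Measurable[m (some (Sum.inr (Sum.inr (Sum.inl i))))] (ξ2 i) :=
      Measurable.of_comap_le le_rfl
    exact h1.mono (le_iSup₂ (f := fun j _ => m j) (some (Sum.inr (Sum.inr (Sum.inl i))))
      ⟨Option.some_ne_none _, rfl⟩) le_rfl
  have hx34c : ∀ i, Measurable[mc i] (ξ34 i) := by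
    intro i
    have h1 : Measurable[m (some (Sum.inr (Sum.inr (Sum.inr i))))] (ξ34 i) :=
      Measurable.of_comap_le le_rfl
    exact h1.mono (le_iSup₂ (f := fun j _ => m j) (some (Sum.inr (Sum.inr (Sum.inr i))))
      ⟨Option.some_ne_none _, rfl⟩) le_rfl
  have hQmq : Measurable[mq ()] Q := by
    have h1 : Measurable[m none] Q := Measurable.of_comap_le le_rfl
    exact h1.mono (le_iSup₂ (f := fun (j : RiskIdx) (_ : j ∈ ({none} : Set RiskIdx)) => m j) none rfl) le_rfl
  have hmc_le : ∀ i, mc i ≤ (inferInstance : MeasurableSpace Ω) := fun i => iSup₂_le fun j _ => h_le j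
  have hmt_le : ∀ n, mt n ≤ (inferInstance : MeasurableSpace Ω) := fun n => iSup₂_le fun j _ => h_le j
  have hmc_le_mt : ∀ {i n : ℕ}, i < n → mc i ≤ mt n := by
    intro i n hin
    refine iSup₂_le fun j hj => ?_
    obtain ⟨hne, hj⟩ := hj
    exact le_iSup₂ (f := fun j _ => m j) j ⟨hne, hj ▸ hin⟩
  -- the per-claim discounted factors
  set Y : ℕ → Ω → ℝ := fun i ω =>
    u1 ^ ((if b i ω = 1 then ξ1 i ω else 0) + (if b i ω = 0 then (ξ34 i ω).1 else 0)) *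
    u2 ^ ((if b i ω = 2 then ξ2 i ω else 0) + (if b i ω = 0 then (ξ34 i ω).2 else 0)) with hYdef
  have hApos : ∀ i ω, 0 ≤ (if b i ω = 1 then ξ1 i ω else 0) + (if b i ω = 0 then (ξ34 i ω).1 else 0) := by
    intro i ω
    refine add_nonneg ?_ ?_
    · split_ifs; exacts [hξ1pos i ω, le_rfl]
    · split_ifs; exacts [(hξ34pos i ω).1, le_rfl]
  have hBpos : ∀ i ω, 0 ≤ (if b i ω = 2 then ξ2 i ω else 0) + (if b i ω = 0 then (ξ34 i ω).2 else 0) := by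
    intro i ω
    refine add_nonneg ?_ ?_
    · split_ifs; exacts [hξ2pos i ω, le_rfl]
    · split_ifs; exacts [(hξ34pos i ω).2, le_rfl]
  have hYpos : ∀ i ω, 0 < Y i ω := fun i ω =>
    mul_pos (rpow_pos_of_pos hu1p _) (rpow_pos_of_pos hu2p _)
  have hYle1 : ∀ i ω, Y i ω ≤ 1 := by
    intro i ω
    have h1 : u1 ^ ((if b i ω = 1 then ξ1 i ω else 0) + (if b i ω = 0 then (ξ34 i ω).1 else 0)) ≤ 1 :=
      rpow_le_one hu1p.le hu1le (hApos i ω)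
    have h2 : u2 ^ ((if b i ω = 2 then ξ2 i ω else 0) + (if b i ω = 0 then (ξ34 i ω).2 else 0)) ≤ 1 :=
      rpow_le_one hu2p.le hu2le (hBpos i ω)
    calc Y i ω ≤ 1 * 1 := by
          refine mul_le_mul h1 h2 (rpow_pos_of_pos hu2p _).le zero_le_one
      _ = 1 := one_mul 1
  have hYmc : ∀ i, Measurable[mc i] (Y i) := by
    intro i
    refine Measurable.mul ?_ ?_
    · refine (my_measurable_rpow hu1p).comp (Measurable.add ?_ ?_)
      · exact Measurable.ite (hbc i (measurableSet_singleton 1)) (hx1c i) measurable_const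
      · exact Measurable.ite (hbc i (measurableSet_singleton 0))
          (measurable_fst.comp (hx34c i)) measurable_const
    · refine (my_measurable_rpow hu2p).comp (Measurable.add ?_ ?_)
      · exact Measurable.ite (hbc i (measurableSet_singleton 2)) (hx2c i) measurable_const
      · exact Measurable.ite (hbc i (measurableSet_singleton 0))
          (measurable_snd.comp (hx34c i)) measurable_const
  have hYmeas : ∀ i, Measurable (Y i) := fun i => (hYmc i).mono (hmc_le i) le_rfl
  -- expectations of individual claim discount factors
  set E1 : ℝ := ∫ ω, u1 ^ ξ1 0 ω ∂P with hE1
  set E2 : ℝ := ∫ ω, u2 ^ ξ2 0 ω ∂P with hE2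
  set E34 : ℝ := ∫ ω, u1 ^ (ξ34 0 ω).1 * u2 ^ (ξ34 0 ω).2 ∂P with hE34
  have hψ1 : Measurable fun x : ℝ => u1 ^ x := my_measurable_rpow hu1p
  have hψ2 : Measurable fun x : ℝ => u2 ^ x := my_measurable_rpow hu2p
  have hψ34 : Measurable fun p : ℝ × ℝ => u1 ^ p.1 * u2 ^ p.2 :=
    (hψ1.comp measurable_fst).mul (hψ2.comp measurable_snd)
  have hφ : ∀ k : ℕ, Measurable fun j : ℕ => if j = k then (1:ℝ) else 0 :=
    fun k => measurable_of_countable _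
  have hφbad : Measurable fun j : ℕ => if j = 0 ∨ j = 1 ∨ j = 2 then (0:ℝ) else 1 :=
    measurable_of_countable _
  -- the four pieces of Y i and their integrals
  have hint1 : ∀ i, ∫ ω, (if b i ω = 1 then (1:ℝ) else 0) * (u1 ^ ξ1 i ω) ∂P
      = (l1/lam) * E1 := by
    intro i
    have hne : (some (Sum.inl i) : RiskIdx) ≠ some (Sum.inr (Sum.inl i)) := by simp
    have hbi : IndepFun (b i) (ξ1 i) P := hindep.indepFun hne
    have hind : IndepFun (fun ω => if b i ω = 1 then (1:ℝ) else 0)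
        (fun ω => u1 ^ ξ1 i ω) P := hbi.comp (hφ 1) hψ1
    have h := hind.integral_mul_eq_mul_integral
      ((hφ 1).comp (hbmeas i)).aestronglyMeasurable
      (hψ1.comp (hξ1meas i)).aestronglyMeasurable
    have h2 : ∫ ω, u1 ^ ξ1 i ω ∂P = E1 := by
      rw [hE1]
      exact ((hξ1id i).comp hψ1).integral_eq
    calc ∫ ω, (if b i ω = 1 then (1:ℝ) else 0) * (u1 ^ ξ1 i ω) ∂P
        = (∫ ω, (if b i ω = 1 then (1:ℝ) else 0) ∂P) * ∫ ω, u1 ^ ξ1 i ω ∂P := h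
      _ = (l1/lam) * E1 := by
          rw [my_integral_ite_one (hbmeas i) 1, hb1 i, h2,
            ENNReal.toReal_ofReal (by positivity)]
  have hint2 : ∀ i, ∫ ω, (if b i ω = 2 then (1:ℝ) else 0) * (u2 ^ ξ2 i ω) ∂P
      = (l2/lam) * E2 := by
    intro i
    have hne : (some (Sum.inl i) : RiskIdx) ≠ some (Sum.inr (Sum.inr (Sum.inl i))) := by simp
    have hbi : IndepFun (b i) (ξ2 i) P := hindep.indepFun hne
    have hind : IndepFun (fun ω => if b i ω = 2 then (1:ℝ) else 0)
        (fun ω => u2 ^ ξ2 i ω) P := hbi.comp (hφ 2) hψ2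
    have h := hind.integral_mul_eq_mul_integral
      ((hφ 2).comp (hbmeas i)).aestronglyMeasurable
      (hψ2.comp (hξ2meas i)).aestronglyMeasurable
    have h2 : ∫ ω, u2 ^ ξ2 i ω ∂P = E2 := by
      rw [hE2]
      exact ((hξ2id i).comp hψ2).integral_eq
    calc ∫ ω, (if b i ω = 2 then (1:ℝ) else 0) * (u2 ^ ξ2 i ω) ∂P
        = (∫ ω, (if b i ω = 2 then (1:ℝ) else 0) ∂P) * ∫ ω, u2 ^ ξ2 i ω ∂P := h
      _ = (l2/lam) * E2 := by
          rw [my_integral_ite_one (hbmeas i) 2, hb2 i, h2,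
            ENNReal.toReal_ofReal (by positivity)]
  have hint3 : ∀ i, ∫ ω, (if b i ω = 0 then (1:ℝ) else 0) * (u1 ^ (ξ34 i ω).1 * u2 ^ (ξ34 i ω).2) ∂P
      = (l0/lam) * E34 := by
    intro i
    have hne : (some (Sum.inl i) : RiskIdx) ≠ some (Sum.inr (Sum.inr (Sum.inr i))) := by simp
    have hbi : IndepFun (b i) (ξ34 i) P := hindep.indepFun hne
    have hind : IndepFun (fun ω => if b i ω = 0 then (1:ℝ) else 0)
        (fun ω => u1 ^ (ξ34 i ω).1 * u2 ^ (ξ34 i ω).2) P := hbi.comp (hφ 0) hψ34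
    have h := hind.integral_mul_eq_mul_integral
      ((hφ 0).comp (hbmeas i)).aestronglyMeasurable
      (hψ34.comp (hξ34meas i)).aestronglyMeasurable
    have h2 : ∫ ω, u1 ^ (ξ34 i ω).1 * u2 ^ (ξ34 i ω).2 ∂P = E34 := by
      rw [hE34]
      exact ((hξ34id i).comp hψ34).integral_eq
    calc ∫ ω, (if b i ω = 0 then (1:ℝ) else 0) * (u1 ^ (ξ34 i ω).1 * u2 ^ (ξ34 i ω).2) ∂P
        = (∫ ω, (if b i ω = 0 then (1:ℝ) else 0) ∂P)
            * ∫ ω, u1 ^ (ξ34 i ω).1 * u2 ^ (ξ34 i ω).2 ∂P := h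
      _ = (l0/lam) * E34 := by
          rw [my_integral_ite_one (hbmeas i) 0, hb0 i, h2,
            ENNReal.toReal_ofReal (by positivity)]
  have hbadnull : ∀ i, P {ω | ¬(b i ω = 0 ∨ b i ω = 1 ∨ b i ω = 2)} = 0 := by
    intro i
    have hS0 : MeasurableSet {ω | b i ω = 0} := hbmeas i (measurableSet_singleton 0)
    have hS1 : MeasurableSet {ω | b i ω = 1} := hbmeas i (measurableSet_singleton 1)
    have hS2 : MeasurableSet {ω | b i ω = 2} := hbmeas i (measurableSet_singleton 2)
    have hd01 : Disjoint {ω | b i ω = 0} {ω | b i ω = 1} := by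
      rw [Set.disjoint_left]; rintro ω h0 h1; simp only [Set.mem_setOf_eq] at h0 h1; omega
    have hd2 : Disjoint ({ω | b i ω = 0} ∪ {ω | b i ω = 1}) {ω | b i ω = 2} := by
      rw [Set.disjoint_left]; rintro ω h0 h1
      simp only [Set.mem_union, Set.mem_setOf_eq] at h0 h1; omega
    have hun : P ({ω | b i ω = 0} ∪ {ω | b i ω = 1} ∪ {ω | b i ω = 2}) = 1 := by
      rw [measure_union hd2 hS2, measure_union hd01 hS1, hb0 i, hb1 i, hb2 i,
        ← ENNReal.ofReal_add (by positivity) (by positivity),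
        ← ENNReal.ofReal_add (by positivity) (by positivity),
        ← add_div, ← add_div, hlam, div_self (by linarith : l0 + l1 + l2 ≠ 0)]
      exact ENNReal.ofReal_one
    have hcompl : P ({ω | b i ω = 0} ∪ {ω | b i ω = 1} ∪ {ω | b i ω = 2})ᶜ = 0 := by
      rw [measure_compl ((hS0.union hS1).union hS2) (measure_ne_top _ _), hun, measure_univ,
        tsub_self]
    have hsub : {ω | ¬(b i ω = 0 ∨ b i ω = 1 ∨ b i ω = 2)}
        ⊆ ({ω | b i ω = 0} ∪ {ω | b i ω = 1} ∪ {ω | b i ω = 2})ᶜ := by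
      intro ω hω
      simp only [Set.mem_setOf_eq] at hω
      simp only [Set.mem_compl_iff, Set.mem_union, Set.mem_setOf_eq]
      tauto
    exact measure_mono_null hsub hcompl
  have hint4 : ∀ i, ∫ ω, (if b i ω = 0 ∨ b i ω = 1 ∨ b i ω = 2 then (0:ℝ) else 1) ∂P = 0 := by
    intro i
    have hae : (fun ω => if b i ω = 0 ∨ b i ω = 1 ∨ b i ω = 2 then (0:ℝ) else 1) =ᵐ[P]
        (fun _ => (0:ℝ)) := by
      rw [Filter.eventuallyEq_iff_exists_mem]
      refine ⟨{ω | b i ω = 0 ∨ b i ω = 1 ∨ b i ω = 2}, ?_, fun ω hω => if_pos hω⟩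
      rw [mem_ae_iff]
      exact hbadnull i
    rw [integral_congr_ae hae, integral_zero]
  -- integrability of the pieces
  have hintg1 : ∀ i, Integrable (fun ω => (if b i ω = 1 then (1:ℝ) else 0) * (u1 ^ ξ1 i ω)) P := by
    intro i
    refine my_integrable_of_le_one (((hφ 1).comp (hbmeas i)).mul
      (hψ1.comp (hξ1meas i))).aestronglyMeasurable (fun ω => ?_) (fun ω => ?_)
    · have := (rpow_pos_of_pos hu1p (ξ1 i ω)).le
      split_ifs <;> simp [this]
    · have h1 := rpow_le_one hu1p.le hu1le (hξ1pos i ω)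
      have h2 := (rpow_pos_of_pos hu1p (ξ1 i ω)).le
      split_ifs <;> simp [h1, h2]
  have hintg2 : ∀ i, Integrable (fun ω => (if b i ω = 2 then (1:ℝ) else 0) * (u2 ^ ξ2 i ω)) P := by
    intro i
    refine my_integrable_of_le_one (((hφ 2).comp (hbmeas i)).mul
      (hψ2.comp (hξ2meas i))).aestronglyMeasurable (fun ω => ?_) (fun ω => ?_)
    · have := (rpow_pos_of_pos hu2p (ξ2 i ω)).le
      split_ifs <;> simp [this]
    · have h1 := rpow_le_one hu2p.le hu2le (hξ2pos i ω)
      have h2 := (rpow_pos_of_pos hu2p (ξ2 i ω)).le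
      split_ifs <;> simp [h1, h2]
  have hintg3 : ∀ i, Integrable
      (fun ω => (if b i ω = 0 then (1:ℝ) else 0) * (u1 ^ (ξ34 i ω).1 * u2 ^ (ξ34 i ω).2)) P := by
    intro i
    have hb34 : ∀ ω, 0 ≤ u1 ^ (ξ34 i ω).1 * u2 ^ (ξ34 i ω).2 := fun ω =>
      mul_nonneg (rpow_pos_of_pos hu1p _).le (rpow_pos_of_pos hu2p _).le
    have hb34' : ∀ ω, u1 ^ (ξ34 i ω).1 * u2 ^ (ξ34 i ω).2 ≤ 1 := by
      intro ω
      calc u1 ^ (ξ34 i ω).1 * u2 ^ (ξ34 i ω).2 ≤ 1 * 1 :=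
            mul_le_mul (rpow_le_one hu1p.le hu1le (hξ34pos i ω).1)
              (rpow_le_one hu2p.le hu2le (hξ34pos i ω).2)
              (rpow_pos_of_pos hu2p _).le zero_le_one
        _ = 1 := one_mul 1
    refine my_integrable_of_le_one (((hφ 0).comp (hbmeas i)).mul
      (hψ34.comp (hξ34meas i))).aestronglyMeasurable (fun ω => ?_) (fun ω => ?_)
    · have := hb34 ω
      split_ifs <;> simp [this]
    · have h1 := hb34' ω
      have h2 := hb34 ω
      split_ifs <;> simp [h1, h2]
  have hintg4 : ∀ i, Integrable
      (fun ω => (if b i ω = 0 ∨ b i ω = 1 ∨ b i ω = 2 then (0:ℝ) else 1)) P := by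
    intro i
    refine my_integrable_of_le_one (hφbad.comp (hbmeas i)).aestronglyMeasurable
      (fun ω => ?_) (fun ω => ?_) <;> split_ifs <;> norm_num
  -- the mean of each Y i
  have hYint : ∀ i, ∫ ω, Y i ω ∂P = l1/lam * E1 + l2/lam * E2 + l0/lam * E34 := by
    intro i
    have hpt : ∀ ω, Y i ω =
        (if b i ω = 1 then (1:ℝ) else 0) * (u1 ^ ξ1 i ω)
        + ((if b i ω = 2 then (1:ℝ) else 0) * (u2 ^ ξ2 i ω)
        + ((if b i ω = 0 then (1:ℝ) else 0) * (u1 ^ (ξ34 i ω).1 * u2 ^ (ξ34 i ω).2)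
        + (if b i ω = 0 ∨ b i ω = 1 ∨ b i ω = 2 then (0:ℝ) else 1))) := by
      intro ω
      by_cases h0 : b i ω = 0
      · simp [hYdef, h0]
      · by_cases h1 : b i ω = 1
        · simp [hYdef, h0, h1]
        · by_cases h2 : b i ω = 2
          · simp [hYdef, h0, h1, h2]
          · simp [hYdef, h0, h1, h2]
    calc ∫ ω, Y i ω ∂P
        = ∫ ω, ((if b i ω = 1 then (1:ℝ) else 0) * (u1 ^ ξ1 i ω)
          + ((if b i ω = 2 then (1:ℝ) else 0) * (u2 ^ ξ2 i ω)
          + ((if b i ω = 0 then (1:ℝ) else 0) * (u1 ^ (ξ34 i ω).1 * u2 ^ (ξ34 i ω).2)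
          + (if b i ω = 0 ∨ b i ω = 1 ∨ b i ω = 2 then (0:ℝ) else 1)))) ∂P :=
          integral_congr_ae (Filter.Eventually.of_forall hpt)
      _ = l1/lam * E1 + l2/lam * E2 + l0/lam * E34 := by
          have hI34 : Integrable (fun ω =>
              (if b i ω = 0 then (1:ℝ) else 0) * (u1 ^ (ξ34 i ω).1 * u2 ^ (ξ34 i ω).2)
              + (if b i ω = 0 ∨ b i ω = 1 ∨ b i ω = 2 then (0:ℝ) else 1)) P :=
            (hintg3 i).add (hintg4 i)
          have hI234 : Integrable (fun ω =>
              (if b i ω = 2 then (1:ℝ) else 0) * (u2 ^ ξ2 i ω)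
              + ((if b i ω = 0 then (1:ℝ) else 0) * (u1 ^ (ξ34 i ω).1 * u2 ^ (ξ34 i ω).2)
              + (if b i ω = 0 ∨ b i ω = 1 ∨ b i ω = 2 then (0:ℝ) else 1))) P :=
            (hintg2 i).add hI34
          rw [integral_add (hintg1 i) hI234, integral_add (hintg2 i) hI34,
            integral_add (hintg3 i) (hintg4 i),
            hint1 i, hint2 i, hint3 i, hint4 i, add_zero]
          ring
  -- bounds on the elementary expectations
  have hE1nn : 0 ≤ E1 := by
    rw [hE1]; exact integral_nonneg fun ω => (rpow_pos_of_pos hu1p _).le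
  have hE1le : E1 ≤ 1 := by
    rw [hE1]
    have hint : Integrable (fun ω => u1 ^ ξ1 0 ω) P :=
      my_integrable_of_le_one (hψ1.comp (hξ1meas 0)).aestronglyMeasurable
        (fun ω => (rpow_pos_of_pos hu1p _).le) (fun ω => rpow_le_one hu1p.le hu1le (hξ1pos 0 ω))
    calc ∫ ω, u1 ^ ξ1 0 ω ∂P ≤ ∫ _ω, (1:ℝ) ∂P :=
          integral_mono hint (integrable_const 1) fun ω => rpow_le_one hu1p.le hu1le (hξ1pos 0 ω)
      _ = 1 := by simp
  have hE2nn : 0 ≤ E2 := by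
    rw [hE2]; exact integral_nonneg fun ω => (rpow_pos_of_pos hu2p _).le
  have hE2le : E2 ≤ 1 := by
    rw [hE2]
    have hint : Integrable (fun ω => u2 ^ ξ2 0 ω) P :=
      my_integrable_of_le_one (hψ2.comp (hξ2meas 0)).aestronglyMeasurable
        (fun ω => (rpow_pos_of_pos hu2p _).le) (fun ω => rpow_le_one hu2p.le hu2le (hξ2pos 0 ω))
    calc ∫ ω, u2 ^ ξ2 0 ω ∂P ≤ ∫ _ω, (1:ℝ) ∂P :=
          integral_mono hint (integrable_const 1) fun ω => rpow_le_one hu2p.le hu2le (hξ2pos 0 ω)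
      _ = 1 := by simp
  have h34nn : ∀ ω, 0 ≤ u1 ^ (ξ34 0 ω).1 * u2 ^ (ξ34 0 ω).2 := fun ω =>
    mul_nonneg (rpow_pos_of_pos hu1p _).le (rpow_pos_of_pos hu2p _).le
  have h34le : ∀ ω, u1 ^ (ξ34 0 ω).1 * u2 ^ (ξ34 0 ω).2 ≤ 1 := by
    intro ω
    calc u1 ^ (ξ34 0 ω).1 * u2 ^ (ξ34 0 ω).2 ≤ 1 * 1 :=
          mul_le_mul (rpow_le_one hu1p.le hu1le (hξ34pos 0 ω).1)
            (rpow_le_one hu2p.le hu2le (hξ34pos 0 ω).2)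
            (rpow_pos_of_pos hu2p _).le zero_le_one
      _ = 1 := one_mul 1
  have hE34nn : 0 ≤ E34 := by
    rw [hE34]; exact integral_nonneg h34nn
  have hE34le : E34 ≤ 1 := by
    rw [hE34]
    have hint : Integrable (fun ω => u1 ^ (ξ34 0 ω).1 * u2 ^ (ξ34 0 ω).2) P :=
      my_integrable_of_le_one (hψ34.comp (hξ34meas 0)).aestronglyMeasurable h34nn h34le
    calc ∫ ω, u1 ^ (ξ34 0 ω).1 * u2 ^ (ξ34 0 ω).2 ∂P ≤ ∫ _ω, (1:ℝ) ∂P :=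
          integral_mono hint (integrable_const 1) h34le
      _ = 1 := by simp
  -- the pgf argument
  set w : ℝ := l1/lam * E1 + l2/lam * E2 + l0/lam * E34 with hwdef
  have hw0 : 0 ≤ w := by
    rw [hwdef]
    have h1 : 0 ≤ l1/lam := by positivity
    have h2 : 0 ≤ l2/lam := by positivity
    have h0 : 0 ≤ l0/lam := by positivity
    nlinarith
  have hw1 : w ≤ 1 := by
    rw [hwdef]
    have h1 : l1/lam * E1 ≤ l1/lam * 1 := by
      have : (0:ℝ) ≤ l1/lam := by positivity
      nlinarith
    have h2 : l2/lam * E2 ≤ l2/lam * 1 := by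
      have : (0:ℝ) ≤ l2/lam := by positivity
      nlinarith
    have h0 : l0/lam * E34 ≤ l0/lam * 1 := by
      have : (0:ℝ) ≤ l0/lam := by positivity
      nlinarith
    have hsum : l1/lam * 1 + l2/lam * 1 + l0/lam * 1 = 1 := by
      field_simp
      rw [hlam]; ring
    linarith
  -- product facts
  have hprodmeas : ∀ n, Measurable fun ω => ∏ i ∈ Finset.range n, Y i ω := fun n =>
    Finset.measurable_prod _ fun i _ => hYmeas i
  have hprodpos : ∀ n ω, 0 ≤ ∏ i ∈ Finset.range n, Y i ω := fun n ω =>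
    Finset.prod_nonneg fun i _ => (hYpos i ω).le
  have hprodle1 : ∀ n ω, (∏ i ∈ Finset.range n, Y i ω) ≤ 1 := fun n ω =>
    Finset.prod_le_one (fun i _ => (hYpos i ω).le) (fun i _ => hYle1 i ω)
  have hprodmt : ∀ n, Measurable[mt n] fun ω => ∏ i ∈ Finset.range n, Y i ω := fun n =>
    Finset.measurable_prod _ fun i hi => (hYmc i).mono (hmc_le_mt (Finset.mem_range.1 hi)) le_rfl
  have hχmq : ∀ n : ℕ, Measurable[mq ()] fun ω => if Q ω = n then (1:ℝ) else 0 := fun n =>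
    Measurable.ite (hQmq (measurableSet_singleton n)) measurable_const measurable_const
  have hχmeas : ∀ n : ℕ, Measurable fun ω => if Q ω = n then (1:ℝ) else 0 := fun n =>
    (hφ n).comp hQmeas
  have hχint : ∀ n : ℕ, ∫ ω, (if Q ω = n then (1:ℝ) else 0) ∂P = (P {ω | Q ω = n}).toReal :=
    fun n => my_integral_ite_one hQmeas n
  -- mean of the partial products
  have hmean : ∀ n, ∫ ω, (∏ i ∈ Finset.range n, Y i ω) ∂P = w ^ n := by
    intro n
    induction n with
    | zero => simp
    | succ n ih =>
      have hind : IndepFun (fun ω => ∏ i ∈ Finset.range n, Y i ω) (Y n) P :=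
        my_indepFun_of_indep (hIndTn n) (hprodmt n) (hYmc n)
      have h := hind.integral_mul_eq_mul_integral (hprodmeas n).aestronglyMeasurable (hYmeas n).aestronglyMeasurable
      calc ∫ ω, (∏ i ∈ Finset.range (n+1), Y i ω) ∂P
          = ∫ ω, (∏ i ∈ Finset.range n, Y i ω) * Y n ω ∂P := by
            simp_rw [Finset.prod_range_succ]
        _ = (∫ ω, (∏ i ∈ Finset.range n, Y i ω) ∂P) * ∫ ω, Y n ω ∂P := h
        _ = w ^ n * w := by rw [ih, hYint n]
        _ = w ^ (n+1) := (pow_succ w n).symm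
  -- partition of unity over the values of Q
  have hQpart : ∑' n : ℕ, P {ω | Q ω = n} = 1 := by
    have hdisj : Pairwise (Function.onFun Disjoint fun n : ℕ => {ω | Q ω = n}) := by
      intro a c hac
      rw [Function.onFun, Set.disjoint_left]
      rintro ω h1 h2
      simp only [Set.mem_setOf_eq] at h1 h2
      exact hac (h1.symm.trans h2)
    rw [← measure_iUnion hdisj fun n => hQmeas (measurableSet_singleton n)]
    have huniv : ⋃ n : ℕ, {ω | Q ω = n} = Set.univ := by
      ext ω; simp
    rw [huniv, measure_univ]
  -- interchanging sum and integral
  have htsum : ∀ (g : ℕ → Ω → ℝ), (∀ n, Measurable (g n)) → (∀ n ω, 0 ≤ g n ω) →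
      (∀ n ω, g n ω ≤ 1) →
      ∫ ω, ∑' n : ℕ, (if Q ω = n then (1:ℝ) else 0) * g n ω ∂P
        = ∑' n : ℕ, ∫ ω, (if Q ω = n then (1:ℝ) else 0) * g n ω ∂P := by
    intro g hgm hg0 hg1
    refine integral_tsum (fun n => ((hχmeas n).mul (hgm n)).aestronglyMeasurable)
      (ne_top_of_le_ne_top ENNReal.one_ne_top ?_)
    have hb : ∀ n : ℕ, ∫⁻ ω, ‖(if Q ω = n then (1:ℝ) else 0) * g n ω‖₊ ∂P
        ≤ P {ω | Q ω = n} := by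
      intro n
      have hle : ∀ ω, ((‖(if Q ω = n then (1:ℝ) else 0) * g n ω‖₊ : ℝ≥0) : ℝ≥0∞)
          ≤ Set.indicator {ω | Q ω = n} (fun _ => (1:ℝ≥0∞)) ω := by
        intro ω
        by_cases h : Q ω = n
        · rw [Set.indicator_of_mem (show ω ∈ {ω | Q ω = n} from h)]
          rw [← enorm_eq_nnnorm, ← ofReal_norm, if_pos h, one_mul,
            Real.norm_eq_abs, abs_of_nonneg (hg0 n ω)]
          exact ENNReal.ofReal_le_one.mpr (hg1 n ω)
        · rw [Set.indicator_of_notMem (show ω ∉ {ω | Q ω = n} from h), if_neg h, zero_mul]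
          simp
      calc ∫⁻ ω, ‖(if Q ω = n then (1:ℝ) else 0) * g n ω‖₊ ∂P
          ≤ ∫⁻ ω, Set.indicator {ω | Q ω = n} (fun _ => (1:ℝ≥0∞)) ω ∂P := lintegral_mono hle
        _ = P {ω | Q ω = n} := by
            rw [lintegral_indicator (show MeasurableSet {ω | Q ω = n} from hQmeas (measurableSet_singleton n))]
            simp
    calc ∑' n : ℕ, ∫⁻ ω, ‖(if Q ω = n then (1:ℝ) else 0) * g n ω‖₊ ∂P
        ≤ ∑' n : ℕ, P {ω | Q ω = n} := ENNReal.tsum_le_tsum hb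
      _ = 1 := hQpart
  -- decomposition of the two integrals
  have hdecomp1 : ∫ ω, (∏ i ∈ Finset.range (Q ω), Y i ω) ∂P
      = ∑' n : ℕ, (P {ω | Q ω = n}).toReal * w ^ n := by
    have hpt : ∀ ω, (∏ i ∈ Finset.range (Q ω), Y i ω)
        = ∑' n : ℕ, (if Q ω = n then (1:ℝ) else 0) * ∏ i ∈ Finset.range n, Y i ω := by
      intro ω
      rw [tsum_eq_single (Q ω) (fun n hn => by rw [if_neg fun h => hn h.symm, zero_mul])]
      rw [if_pos rfl, one_mul]
    calc ∫ ω, (∏ i ∈ Finset.range (Q ω), Y i ω) ∂P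
        = ∫ ω, ∑' n : ℕ, (if Q ω = n then (1:ℝ) else 0) * ∏ i ∈ Finset.range n, Y i ω ∂P :=
          integral_congr_ae (Filter.Eventually.of_forall hpt)
      _ = ∑' n : ℕ, ∫ ω, (if Q ω = n then (1:ℝ) else 0) * ∏ i ∈ Finset.range n, Y i ω ∂P :=
          htsum _ hprodmeas hprodpos hprodle1
      _ = ∑' n : ℕ, (P {ω | Q ω = n}).toReal * w ^ n := by
          refine tsum_congr fun n => ?_
          have hind : IndepFun (fun ω => if Q ω = n then (1:ℝ) else 0)
              (fun ω => ∏ i ∈ Finset.range n, Y i ω) P :=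
            my_indepFun_of_indep (hIndQn n) (hχmq n) (hprodmt n)
          have h := hind.integral_mul_eq_mul_integral (hχmeas n).aestronglyMeasurable
            (hprodmeas n).aestronglyMeasurable
          rw [hχint n, hmean n] at h
          exact h
  have hdecomp2 : ∫ ω, w ^ Q ω ∂P = ∑' n : ℕ, (P {ω | Q ω = n}).toReal * w ^ n := by
    have hpt : ∀ ω, w ^ Q ω
        = ∑' n : ℕ, (if Q ω = n then (1:ℝ) else 0) * w ^ n := by
      intro ω
      rw [tsum_eq_single (Q ω) (fun n hn => by rw [if_neg fun h => hn h.symm, zero_mul])]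
      rw [if_pos rfl, one_mul]
    calc ∫ ω, w ^ Q ω ∂P
        = ∫ ω, ∑' n : ℕ, (if Q ω = n then (1:ℝ) else 0) * w ^ n ∂P :=
          integral_congr_ae (Filter.Eventually.of_forall hpt)
      _ = ∑' n : ℕ, ∫ ω, (if Q ω = n then (1:ℝ) else 0) * w ^ n ∂P :=
          htsum (fun n _ => w ^ n) (fun n => measurable_const)
            (fun n ω => pow_nonneg hw0 n) (fun n ω => pow_le_one₀ hw0 hw1)
      _ = ∑' n : ℕ, (P {ω | Q ω = n}).toReal * w ^ n := by
          refine tsum_congr fun n => ?_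
          rw [integral_mul_const, hχint n]
  -- final assembly
  have hfinal := hQpgf w ⟨hw0, hw1⟩
  have hptfull : ∀ ω, u1 ^ (∑ i ∈ Finset.range (Q ω),
        ((if b i ω = 1 then ξ1 i ω else 0) + (if b i ω = 0 then (ξ34 i ω).1 else 0))) *
      u2 ^ (∑ i ∈ Finset.range (Q ω),
        ((if b i ω = 2 then ξ2 i ω else 0) + (if b i ω = 0 then (ξ34 i ω).2 else 0)))
      = ∏ i ∈ Finset.range (Q ω), Y i ω := by
    intro ω
    rw [my_rpow_sum hu1p, my_rpow_sum hu2p, ← Finset.prod_mul_distrib]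
  have hbase : lam * (1 - w) + θ = l1 * (1 - E1) + l2 * (1 - E2) + l0 * (1 - E34) + θ := by
    rw [hwdef]
    field_simp
    rw [hlam]
    ring
  calc ∫ ω, u1 ^ (∑ i ∈ Finset.range (Q ω),
        ((if b i ω = 1 then ξ1 i ω else 0) + (if b i ω = 0 then (ξ34 i ω).1 else 0))) *
      u2 ^ (∑ i ∈ Finset.range (Q ω),
        ((if b i ω = 2 then ξ2 i ω else 0) + (if b i ω = 0 then (ξ34 i ω).2 else 0))) ∂P
      = ∫ ω, (∏ i ∈ Finset.range (Q ω), Y i ω) ∂P :=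
        integral_congr_ae (Filter.Eventually.of_forall hptfull)
    _ = ∑' n : ℕ, (P {ω | Q ω = n}).toReal * w ^ n := hdecomp1
    _ = ∫ ω, w ^ Q ω ∂P := hdecomp2.symm
    _ = (1 + μ⁻¹ * ((lam * (1 - w) + θ) ^ α - θ ^ α)) ^ (-(ρ * t)) := hfinal
    _ = (1 + μ⁻¹ * ((l1 * (1 - E1) + l2 * (1 - E2) + l0 * (1 - E34) + θ) ^ α - θ ^ α))
        ^ (-(ρ * t)) := by rw [hbase]
end

section
/- Let α ∈ (0,1), θ > 0, μ > 0, ρ > 0, t > 0 and λ_0, λ_1, λ_2 > 0, and let ν be a probability measure on [0,∞) satisfying ∫₀^∞ e^{−w x} dν(x) = (1 + μ^{−1}((w+θ)^α − θ^α))^{−ρt} for all w ≥ 0. On a probability space (Ω, 𝔽, P), let (Q_1, Q_2, Q_0) : Ω → ℕ³ have joint pmf P(Q_1 = k_1, Q_2 = k_2, Q_0 = k_3) = ∫₀^∞ (e^{−λ_1 x}(λ_1 x)^{k_1}/k_1!)(e^{−λ_2 x}(λ_2 x)^{k_2}/k_2!)(e^{−λ_0 x}(λ_0 x)^{k_3}/k_3!)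 dν(x), and let (ξ_{1,i})_{i ≥ 1}, (ξ_{2,i})_{i ≥ 1} : Ω → [0,∞) and ((ξ_{3,i}, ξ_{4,i}))_{i ≥ 1} : Ω → [0,∞)² be such that the ξ_{1,i} are i.i.d., the ξ_{2,i} are i.i.d., the pairs (ξ_{3,i}, ξ_{4,i}) are i.i.d., and (Q_1, Q_2, Q_0) together with the three claim sequences are mutually independent. Define S_1 = Σ_{i=1}^{Q_1} ξ_{1,i} + Σ_{i=1}^{Q_0} ξ_{3,i} and S_2 = Σ_{i=1}^{Q_2} ξ_{2,i} + Σ_{i=1}^{Q_0} ξ_{4,i}. Then for all u_1, u_2 ∈ (0,1], E[u_1^{S_1} u_2^{S_2}] = (1 + μ^{−1}[(λ_1(1 − E[u_1^{ξ_{1,1}}]) + λ_2(1 − E[u_2^{ξ_{2,1}}]) + λ_0(1 − E[u_1^{ξ_{3,1}} u_2^{ξ_{4,1}}]) + θ)^α − θ^α])^{−ρt}. -/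
open MeasureTheory Real ProbabilityTheory

/-- Index type for the family consisting of the triple (Q₁, Q₂, Q₀) and the three
claim sequences ξ₁, ξ₂ and (ξ₃, ξ₄). -/
abbrev ClaimIdx : Type := Option (ℕ ⊕ ℕ ⊕ ℕ)

/-- Codomain of each member of the family. -/
def claimType : ClaimIdx → Type
  | none => ℕ × ℕ × ℕ
  | some (Sum.inl _) => ℝ
  | some (Sum.inr (Sum.inl _)) => ℝ
  | some (Sum.inr (Sum.inr _)) => ℝ × ℝ

/-- The family of random variables (Q₁, Q₂, Q₀), ξ_{1,i}, ξ_{2,i}, (ξ_{3,i}, ξ_{4,i}). -/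
def claimFam {Ω : Type*} (Q1 Q2 Q0 : Ω → ℕ) (ξ1 ξ2 : ℕ → Ω → ℝ)
    (ξ34 : ℕ → Ω → ℝ × ℝ) : (i : ClaimIdx) → Ω → claimType i
  | none => fun ω => (Q1 ω, Q2 ω, Q0 ω)
  | some (Sum.inl i) => ξ1 i
  | some (Sum.inr (Sum.inl i)) => ξ2 i
  | some (Sum.inr (Sum.inr i)) => ξ34 i

/-- The measurable-space structure on each codomain. -/
def claimMS : (i : ClaimIdx) → MeasurableSpace (claimType i)
  | none => inferInstanceAs (MeasurableSpace (ℕ × ℕ × ℕ))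
  | some (Sum.inl _) => inferInstanceAs (MeasurableSpace ℝ)
  | some (Sum.inr (Sum.inl _)) => inferInstanceAs (MeasurableSpace ℝ)
  | some (Sum.inr (Sum.inr _)) => inferInstanceAs (MeasurableSpace (ℝ × ℝ))

lemma aux_integral_prod {Ω ι : Type*} [MeasurableSpace Ω] {P : Measure Ω} [IsProbabilityMeasure P]
    {β : ι → Type*} (m : ∀ i, MeasurableSpace (β i)) (f : ∀ i, Ω → β i)
    (hindep : iIndepFun (m := m) f P) (hfm : ∀ i, @Measurable Ω (β i) _ (m i) (f i))
    (φ : ∀ i, β i → ℝ) (hφm : ∀ i, @Measurable (β i) ℝ (m i) _ (φ i))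
    (hφ0 : ∀ i x, 0 ≤ φ i x) (hφ1 : ∀ i x, φ i x ≤ 1) (S : Finset ι) :
    ∫ ω, ∏ i ∈ S, φ i (f i ω) ∂P = ∏ i ∈ S, ∫ ω, φ i (f i ω) ∂P := by
  classical
  have hF : iIndepFun (m := fun _ => (inferInstance : MeasurableSpace ℝ))
      (fun i => (φ i) ∘ (f i)) P := hindep.comp φ hφm
  have hFm : ∀ i, Measurable ((φ i) ∘ (f i)) := fun i => (hφm i).comp (hfm i)
  have hint : ∀ (T : Finset ι), Integrable (fun ω => ∏ i ∈ T, φ i (f i ω)) P := by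
    intro T
    refine Integrable.mono' (integrable_const (1:ℝ))
      (Finset.measurable_prod _ fun i _ => hFm i).aestronglyMeasurable
      (ae_of_all _ fun ω => ?_)
    rw [Real.norm_eq_abs, abs_of_nonneg (Finset.prod_nonneg fun i _ => hφ0 i _)]
    exact Finset.prod_le_one (fun i _ => hφ0 i _) (fun i _ => hφ1 i _)
  have hint1 : ∀ i, Integrable (fun ω => φ i (f i ω)) P := by
    intro i
    simpa using hint {i}
  induction S using Finset.induction_on with
  | empty => simp
  | @insert j S hj ih =>
    simp only [Finset.prod_insert hj]
    have hprod : (fun ω => ∏ i ∈ S, φ i (f i ω)) = ∏ i ∈ S, (φ i) ∘ (f i) := by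
      funext ω; rw [Finset.prod_apply]; rfl
    have hI : IndepFun (fun ω => φ j (f j ω)) (fun ω => ∏ i ∈ S, φ i (f i ω)) P := by
      rw [hprod]
      exact (hF.indepFun_finsetProd_of_notMem hFm hj).symm
    calc ∫ ω, φ j (f j ω) * ∏ i ∈ S, φ i (f i ω) ∂P
        = (∫ ω, φ j (f j ω) ∂P) * ∫ ω, ∏ i ∈ S, φ i (f i ω) ∂P :=
          hI.integral_fun_mul_eq_mul_integral (hint1 j).aestronglyMeasurable (hint S).aestronglyMeasurable
      _ = _ := by rw [ih]

lemma tsum_triple_mul (f1 f2 f3 : ℕ → ℝ) (h1 : Summable f1) (h2 : Summable f2)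
    (h3 : Summable f3) (n1 : ∀ n, 0 ≤ f1 n) (n2 : ∀ n, 0 ≤ f2 n) (n3 : ∀ n, 0 ≤ f3 n) :
    ∑' k : ℕ × ℕ × ℕ, f1 k.1 * (f2 k.2.1 * f3 k.2.2)
      = (∑' n, f1 n) * ((∑' n, f2 n) * (∑' n, f3 n)) := by
  have s23 : Summable (fun q : ℕ × ℕ => f2 q.1 * f3 q.2) :=
    h2.mul_of_nonneg h3 (fun n => n2 n) (fun n => n3 n)
  have s123 : Summable (fun k : ℕ × ℕ × ℕ => f1 k.1 * (f2 k.2.1 * f3 k.2.2)) :=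
    h1.mul_of_nonneg s23 (fun n => n1 n) (fun q => mul_nonneg (n2 q.1) (n3 q.2))
  have hin23 : ∀ b : ℕ, Summable (fun c : ℕ => f2 b * f3 c) := fun b => h3.mul_left (f2 b)
  have hin123 : ∀ a : ℕ, Summable (fun q : ℕ × ℕ => f1 a * (f2 q.1 * f3 q.2)) := fun a =>
    s23.mul_left (f1 a)
  have inner : (∑' q : ℕ × ℕ, f2 q.1 * f3 q.2) = (∑' n, f2 n) * (∑' n, f3 n) := by
    calc (∑' q : ℕ × ℕ, f2 q.1 * f3 q.2)
        = ∑' (b : ℕ), ∑' (c : ℕ), f2 b * f3 c := Summable.tsum_prod' s23 hin23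
      _ = ∑' (b : ℕ), f2 b * ∑' (c : ℕ), f3 c := tsum_congr fun b => tsum_mul_left
      _ = (∑' n, f2 n) * (∑' n, f3 n) := tsum_mul_right
  calc (∑' k : ℕ × ℕ × ℕ, f1 k.1 * (f2 k.2.1 * f3 k.2.2))
      = ∑' (a : ℕ), ∑' (q : ℕ × ℕ), f1 a * (f2 q.1 * f3 q.2) :=
        Summable.tsum_prod' s123 hin123
    _ = ∑' (a : ℕ), f1 a * ∑' (q : ℕ × ℕ), f2 q.1 * f3 q.2 :=
        tsum_congr fun a => tsum_mul_left
    _ = (∑' n, f1 n) * ∑' (q : ℕ × ℕ), f2 q.1 * f3 q.2 := tsum_mul_right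
    _ = (∑' n, f1 n) * ((∑' n, f2 n) * (∑' n, f3 n)) := by rw [inner]

/-- The mark functions used in the factorisation. -/
noncomputable def claimPhi (u1 u2 : ℝ) (k : ℕ × ℕ × ℕ) : (i : ClaimIdx) → claimType i → ℝ
  | none => fun q : ℕ × ℕ × ℕ => if q = k then (1:ℝ) else 0
  | some (Sum.inl _) => fun x : ℝ => Real.exp (Real.log u1 * max x 0)
  | some (Sum.inr (Sum.inl _)) => fun x : ℝ => Real.exp (Real.log u2 * max x 0)
  | some (Sum.inr (Sum.inr _)) => fun p : ℝ × ℝ =>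
      Real.exp (Real.log u1 * max p.1 0) * Real.exp (Real.log u2 * max p.2 0)

set_option maxHeartbeats 2000000 in
/-- the bivariate claim amount process (S₁, S₂) of the common-shock model has
the same joint pgf as the single-count compound pair (S₃, S₄). -/
theorem claim_amount_pgf
    {Ω : Type*} [MeasurableSpace Ω] (P : Measure Ω) [IsProbabilityMeasure P]
    {α θ μ ρ t : ℝ}
    (hα : α ∈ Set.Ioo (0:ℝ) 1) (hθ : 0 < θ) (hμ : 0 < μ) (hρ : 0 < ρ) (ht : 0 < t)
    {l0 l1 l2 : ℝ} (hl0 : 0 < l0) (hl1 : 0 < l1) (hl2 : 0 < l2)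
    (ν : Measure ℝ) [IsProbabilityMeasure ν] (hνsupp : ν (Set.Iio 0) = 0)
    (hLap : ∀ w : ℝ, 0 ≤ w →
      ∫ x, Real.exp (-w * x) ∂ν
        = (1 + μ⁻¹ * ((w + θ) ^ α - θ ^ α)) ^ (-(ρ * t)))
    (Q1 Q2 Q0 : Ω → ℕ) (ξ1 ξ2 : ℕ → Ω → ℝ) (ξ34 : ℕ → Ω → ℝ × ℝ)
    (hQ1meas : Measurable Q1) (hQ2meas : Measurable Q2) (hQ0meas : Measurable Q0)
    (hξ1meas : ∀ i, Measurable (ξ1 i)) (hξ2meas : ∀ i, Measurable (ξ2 i))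
    (hξ34meas : ∀ i, Measurable (ξ34 i))
    -- the claims take values in [0, ∞)
    (hξ1pos : ∀ i ω, 0 ≤ ξ1 i ω) (hξ2pos : ∀ i ω, 0 ≤ ξ2 i ω)
    (hξ34pos : ∀ i ω, 0 ≤ (ξ34 i ω).1 ∧ 0 ≤ (ξ34 i ω).2)
    -- the joint pmf of (Q₁, Q₂, Q₀) is the ν-mixture of products of Poisson pmfs
    (hpmf : ∀ k1 k2 k3 : ℕ,
      P {ω | Q1 ω = k1 ∧ Q2 ω = k2 ∧ Q0 ω = k3}
        = ENNReal.ofReal (∫ x,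
            (Real.exp (-l1 * x) * (l1 * x) ^ k1 / (Nat.factorial k1 : ℝ)) *
            (Real.exp (-l2 * x) * (l2 * x) ^ k2 / (Nat.factorial k2 : ℝ)) *
            (Real.exp (-l0 * x) * (l0 * x) ^ k3 / (Nat.factorial k3 : ℝ)) ∂ν))
    -- (Q₁, Q₂, Q₀) and the three claim sequences are all mutually independent
    (hindep : iIndepFun (m := claimMS) (claimFam Q1 Q2 Q0 ξ1 ξ2 ξ34) P)
    -- the claim sequences are identically distributed
    (hξ1id : ∀ i, IdentDistrib (ξ1 i) (ξ1 0) P P)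
    (hξ2id : ∀ i, IdentDistrib (ξ2 i) (ξ2 0) P P)
    (hξ34id : ∀ i, IdentDistrib (ξ34 i) (ξ34 0) P P) :
    ∀ u1 u2 : ℝ, u1 ∈ Set.Ioc (0:ℝ) 1 → u2 ∈ Set.Ioc (0:ℝ) 1 →
      ∫ ω, u1 ^ ((∑ i ∈ Finset.range (Q1 ω), ξ1 i ω) +
            (∑ i ∈ Finset.range (Q0 ω), (ξ34 i ω).1)) *
          u2 ^ ((∑ i ∈ Finset.range (Q2 ω), ξ2 i ω) +
            (∑ i ∈ Finset.range (Q0 ω), (ξ34 i ω).2)) ∂P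
        = (1 + μ⁻¹ * ((l1 * (1 - ∫ ω, u1 ^ ξ1 0 ω ∂P)
              + l2 * (1 - ∫ ω, u2 ^ ξ2 0 ω ∂P)
              + l0 * (1 - ∫ ω, u1 ^ (ξ34 0 ω).1 * u2 ^ (ξ34 0 ω).2 ∂P)
              + θ) ^ α - θ ^ α)) ^ (-(ρ * t)) := by
  classical
  intro u1 u2 hu1 hu2
  obtain ⟨hu1p, hu1le⟩ := hu1
  obtain ⟨hu2p, hu2le⟩ := hu2
  have hlog1 : Real.log u1 ≤ 0 := Real.log_nonpos hu1p.le hu1le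
  have hlog2 : Real.log u2 ≤ 0 := Real.log_nonpos hu2p.le hu2le
  have hrw1 : ∀ x : ℝ, u1 ^ x = Real.exp (Real.log u1 * x) := fun x =>
    Real.rpow_def_of_pos hu1p x
  have hrw2 : ∀ x : ℝ, u2 ^ x = Real.exp (Real.log u2 * x) := fun x =>
    Real.rpow_def_of_pos hu2p x
  simp only [hrw1, hrw2]
  set g1 := ∫ ω, Real.exp (Real.log u1 * ξ1 0 ω) ∂P with hg1def
  set g2 := ∫ ω, Real.exp (Real.log u2 * ξ2 0 ω) ∂P with hg2def
  set g3 := ∫ ω, Real.exp (Real.log u1 * (ξ34 0 ω).1) * Real.exp (Real.log u2 * (ξ34 0 ω).2) ∂P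
    with hg3def
  -- basic bounds on exponentials
  have hexple : ∀ (a x : ℝ), a ≤ 0 → 0 ≤ x → Real.exp (a * x) ≤ 1 := fun a x ha hx =>
    Real.exp_le_one_iff.2 (mul_nonpos_iff.2 (Or.inr ⟨ha, hx⟩))
  -- integrability of bounded measurable functions
  have hmono : ∀ (h : Ω → ℝ), Measurable h → (∀ ω, 0 ≤ h ω) → (∀ ω, h ω ≤ 1) →
      Integrable h P := by
    intro h hm h0 h1
    refine Integrable.mono' (integrable_const (1:ℝ)) hm.aestronglyMeasurable
      (ae_of_all _ fun ω => ?_)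
    rw [Real.norm_eq_abs, abs_of_nonneg (h0 ω)]; exact h1 ω
  -- bounds on the generating-function values
  have hg1_nonneg : 0 ≤ g1 := integral_nonneg fun ω => (Real.exp_pos _).le
  have hg2_nonneg : 0 ≤ g2 := integral_nonneg fun ω => (Real.exp_pos _).le
  have hg3_nonneg : 0 ≤ g3 :=
    integral_nonneg fun ω => mul_nonneg (Real.exp_pos _).le (Real.exp_pos _).le
  have hg1_le : g1 ≤ 1 := by
    rw [hg1def]
    calc ∫ ω, Real.exp (Real.log u1 * ξ1 0 ω) ∂P
        ≤ ∫ _ω, (1:ℝ) ∂P := by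
          refine integral_mono (hmono _ (((hξ1meas 0).const_mul _).exp)
            (fun ω => (Real.exp_pos _).le)
            (fun ω => hexple _ _ hlog1 (hξ1pos 0 ω))) (integrable_const 1)
            (fun ω => hexple _ _ hlog1 (hξ1pos 0 ω))
      _ = 1 := by simp
  have hg2_le : g2 ≤ 1 := by
    rw [hg2def]
    calc ∫ ω, Real.exp (Real.log u2 * ξ2 0 ω) ∂P
        ≤ ∫ _ω, (1:ℝ) ∂P := by
          refine integral_mono (hmono _ (((hξ2meas 0).const_mul _).exp)
            (fun ω => (Real.exp_pos _).le)
            (fun ω => hexple _ _ hlog2 (hξ2pos 0 ω))) (integrable_const 1)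
            (fun ω => hexple _ _ hlog2 (hξ2pos 0 ω))
      _ = 1 := by simp
  have hg3_le : g3 ≤ 1 := by
    rw [hg3def]
    have hb : ∀ ω, Real.exp (Real.log u1 * (ξ34 0 ω).1) * Real.exp (Real.log u2 * (ξ34 0 ω).2)
        ≤ 1 := by
      intro ω
      have h1 := hexple _ _ hlog1 (hξ34pos 0 ω).1
      have h2 := hexple _ _ hlog2 (hξ34pos 0 ω).2
      nlinarith [Real.exp_pos (Real.log u1 * (ξ34 0 ω).1),
        Real.exp_pos (Real.log u2 * (ξ34 0 ω).2)]
    calc ∫ ω, Real.exp (Real.log u1 * (ξ34 0 ω).1) * Real.exp (Real.log u2 * (ξ34 0 ω).2) ∂P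
        ≤ ∫ _ω, (1:ℝ) ∂P := by
          refine integral_mono (hmono _
            ((((measurable_fst.comp (hξ34meas 0)).const_mul _).exp).mul
              (((measurable_snd.comp (hξ34meas 0)).const_mul _).exp))
            (fun ω => mul_nonneg (Real.exp_pos _).le (Real.exp_pos _).le) hb)
            (integrable_const 1) hb
      _ = 1 := by simp
  -- the partition of Ω according to the values of (Q1, Q2, Q0)
  set A : ℕ × ℕ × ℕ → Set Ω :=
    fun k => {ω | Q1 ω = k.1 ∧ Q2 ω = k.2.1 ∧ Q0 ω = k.2.2} with hA
  have hAmeas : ∀ k, MeasurableSet (A k) := by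
    intro k
    have : A k = Q1 ⁻¹' {k.1} ∩ (Q2 ⁻¹' {k.2.1} ∩ Q0 ⁻¹' {k.2.2}) := by
      ext ω; simp [hA]
    rw [this]
    exact (hQ1meas (measurableSet_singleton _)).inter
      ((hQ2meas (measurableSet_singleton _)).inter (hQ0meas (measurableSet_singleton _)))
  have hAdisj : Pairwise (Function.onFun Disjoint A) := by
    rintro ⟨a, b, c⟩ ⟨a', b', c'⟩ hne
    simp only [Function.onFun, Set.disjoint_left, hA, Set.mem_setOf_eq]
    rintro ω ⟨h1, h2, h3⟩ ⟨h4, h5, h6⟩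
    exact hne (by simp_all)
  have hAunion : (⋃ k, A k) = Set.univ := by
    ext ω
    simp only [Set.mem_iUnion, Set.mem_univ, iff_true, hA, Set.mem_setOf_eq]
    exact ⟨(Q1 ω, Q2 ω, Q0 ω), rfl, rfl, rfl⟩
  -- measurability and integrability of the integrand
  have hfmeas : Measurable (fun ω =>
      Real.exp (Real.log u1 * ((∑ i ∈ Finset.range (Q1 ω), ξ1 i ω) +
        ∑ i ∈ Finset.range (Q0 ω), (ξ34 i ω).1)) *
      Real.exp (Real.log u2 * ((∑ i ∈ Finset.range (Q2 ω), ξ2 i ω) +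
        ∑ i ∈ Finset.range (Q0 ω), (ξ34 i ω).2))) := by
    have hh : Measurable (fun p : Ω × (ℕ × ℕ × ℕ) =>
        Real.exp (Real.log u1 * ((∑ i ∈ Finset.range p.2.1, ξ1 i p.1) +
          ∑ i ∈ Finset.range p.2.2.2, (ξ34 i p.1).1)) *
        Real.exp (Real.log u2 * ((∑ i ∈ Finset.range p.2.2.1, ξ2 i p.1) +
          ∑ i ∈ Finset.range p.2.2.2, (ξ34 i p.1).2))) := by
      apply measurable_from_prod_countable_left
      rintro ⟨k1, k2, k3⟩
      simp only
      have m1 : Measurable (fun ω : Ω => ∑ i ∈ Finset.range k1, ξ1 i ω) :=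
        Finset.measurable_sum _ fun i _ => hξ1meas i
      have m2 : Measurable (fun ω : Ω => ∑ i ∈ Finset.range k2, ξ2 i ω) :=
        Finset.measurable_sum _ fun i _ => hξ2meas i
      have m3 : Measurable (fun ω : Ω => ∑ i ∈ Finset.range k3, (ξ34 i ω).1) :=
        Finset.measurable_sum _ fun i _ => measurable_fst.comp (hξ34meas i)
      have m4 : Measurable (fun ω : Ω => ∑ i ∈ Finset.range k3, (ξ34 i ω).2) :=
        Finset.measurable_sum _ fun i _ => measurable_snd.comp (hξ34meas i)
      exact (((m1.add m3).const_mul _).exp).mul (((m2.add m4).const_mul _).exp)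
    have hm : Measurable fun ω : Ω => (ω, (Q1 ω, Q2 ω, Q0 ω)) :=
      measurable_id.prodMk (hQ1meas.prodMk (hQ2meas.prodMk hQ0meas))
    have h2 := hh.comp hm
    exact h2
  have hfle : ∀ ω, Real.exp (Real.log u1 * ((∑ i ∈ Finset.range (Q1 ω), ξ1 i ω) +
        ∑ i ∈ Finset.range (Q0 ω), (ξ34 i ω).1)) *
      Real.exp (Real.log u2 * ((∑ i ∈ Finset.range (Q2 ω), ξ2 i ω) +
        ∑ i ∈ Finset.range (Q0 ω), (ξ34 i ω).2)) ≤ 1 := by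
    intro ω
    have ha : Real.exp (Real.log u1 * ((∑ i ∈ Finset.range (Q1 ω), ξ1 i ω) +
        ∑ i ∈ Finset.range (Q0 ω), (ξ34 i ω).1)) ≤ 1 :=
      hexple _ _ hlog1 (add_nonneg (Finset.sum_nonneg fun i _ => hξ1pos i ω)
        (Finset.sum_nonneg fun i _ => (hξ34pos i ω).1))
    have hb : Real.exp (Real.log u2 * ((∑ i ∈ Finset.range (Q2 ω), ξ2 i ω) +
        ∑ i ∈ Finset.range (Q0 ω), (ξ34 i ω).2)) ≤ 1 :=
      hexple _ _ hlog2 (add_nonneg (Finset.sum_nonneg fun i _ => hξ2pos i ω)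
        (Finset.sum_nonneg fun i _ => (hξ34pos i ω).2))
    nlinarith [Real.exp_pos (Real.log u1 * ((∑ i ∈ Finset.range (Q1 ω), ξ1 i ω) +
        ∑ i ∈ Finset.range (Q0 ω), (ξ34 i ω).1)),
      Real.exp_pos (Real.log u2 * ((∑ i ∈ Finset.range (Q2 ω), ξ2 i ω) +
        ∑ i ∈ Finset.range (Q0 ω), (ξ34 i ω).2))]
  have hfint : Integrable (fun ω =>
      Real.exp (Real.log u1 * ((∑ i ∈ Finset.range (Q1 ω), ξ1 i ω) +
        ∑ i ∈ Finset.range (Q0 ω), (ξ34 i ω).1)) *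
      Real.exp (Real.log u2 * ((∑ i ∈ Finset.range (Q2 ω), ξ2 i ω) +
        ∑ i ∈ Finset.range (Q0 ω), (ξ34 i ω).2))) P :=
    hmono _ hfmeas (fun ω => mul_nonneg (Real.exp_pos _).le (Real.exp_pos _).le) hfle
  -- Step 1: decompose the integral over the partition
  have h1 : ∫ ω, Real.exp (Real.log u1 * ((∑ i ∈ Finset.range (Q1 ω), ξ1 i ω) +
        ∑ i ∈ Finset.range (Q0 ω), (ξ34 i ω).1)) *
      Real.exp (Real.log u2 * ((∑ i ∈ Finset.range (Q2 ω), ξ2 i ω) +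
        ∑ i ∈ Finset.range (Q0 ω), (ξ34 i ω).2)) ∂P
      = ∑' k : ℕ × ℕ × ℕ, ∫ ω in A k,
          Real.exp (Real.log u1 * ((∑ i ∈ Finset.range (Q1 ω), ξ1 i ω) +
            ∑ i ∈ Finset.range (Q0 ω), (ξ34 i ω).1)) *
          Real.exp (Real.log u2 * ((∑ i ∈ Finset.range (Q2 ω), ξ2 i ω) +
            ∑ i ∈ Finset.range (Q0 ω), (ξ34 i ω).2)) ∂P := by
    rw [← setIntegral_univ, ← hAunion]
    exact integral_iUnion hAmeas hAdisj hfint.integrableOn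
  -- measurability of the family and of the mark functions
  have hfamm : ∀ i, @Measurable Ω (claimType i) _ (claimMS i) (claimFam Q1 Q2 Q0 ξ1 ξ2 ξ34 i) := by
    intro i
    match i with
    | none => exact hQ1meas.prodMk (hQ2meas.prodMk hQ0meas)
    | some (Sum.inl i) => exact hξ1meas i
    | some (Sum.inr (Sum.inl i)) => exact hξ2meas i
    | some (Sum.inr (Sum.inr i)) => exact hξ34meas i
  have hφm : ∀ (k : ℕ × ℕ × ℕ) i, @Measurable (claimType i) ℝ (claimMS i) _
      (claimPhi u1 u2 k i) := by
    intro k i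
    match i with
    | none => exact measurable_of_countable (α := ℕ × ℕ × ℕ) _
    | some (Sum.inl i) => exact ((measurable_id.max measurable_const).const_mul _).exp
    | some (Sum.inr (Sum.inl i)) => exact ((measurable_id.max measurable_const).const_mul _).exp
    | some (Sum.inr (Sum.inr i)) =>
        exact (((measurable_fst.max measurable_const).const_mul _).exp).mul
          (((measurable_snd.max measurable_const).const_mul _).exp)
  have hφ0 : ∀ (k : ℕ × ℕ × ℕ) i x, 0 ≤ claimPhi u1 u2 k i x := by
    intro k i
    match i with
    | none => intro x; simp only [claimPhi]; split <;> norm_num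
    | some (Sum.inl i) => intro x; exact (Real.exp_pos _).le
    | some (Sum.inr (Sum.inl i)) => intro x; exact (Real.exp_pos _).le
    | some (Sum.inr (Sum.inr i)) =>
        intro x; exact mul_nonneg (Real.exp_pos _).le (Real.exp_pos _).le
  have hφ1 : ∀ (k : ℕ × ℕ × ℕ) i x, claimPhi u1 u2 k i x ≤ 1 := by
    intro k i
    match i with
    | none => intro x; simp only [claimPhi]; split <;> norm_num
    | some (Sum.inl i) => intro x; exact hexple _ _ hlog1 (le_max_right _ _)
    | some (Sum.inr (Sum.inl i)) => intro x; exact hexple _ _ hlog2 (le_max_right _ _)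
    | some (Sum.inr (Sum.inr i)) =>
        intro x
        have h1 := hexple _ _ hlog1 (le_max_right x.1 0)
        have h2 := hexple _ _ hlog2 (le_max_right x.2 0)
        simp only [claimPhi]
        nlinarith [Real.exp_pos (Real.log u1 * max x.1 0), Real.exp_pos (Real.log u2 * max x.2 0)]
  -- Step 2: compute the integral over each cell of the partition
  have h2 : ∀ k : ℕ × ℕ × ℕ,
      (∫ ω in A k,
          Real.exp (Real.log u1 * ((∑ i ∈ Finset.range (Q1 ω), ξ1 i ω) +
            ∑ i ∈ Finset.range (Q0 ω), (ξ34 i ω).1)) *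
          Real.exp (Real.log u2 * ((∑ i ∈ Finset.range (Q2 ω), ξ2 i ω) +
            ∑ i ∈ Finset.range (Q0 ω), (ξ34 i ω).2)) ∂P)
        = (P (A k)).toReal * (g1 ^ k.1 * (g2 ^ k.2.1 * g3 ^ k.2.2)) := by
    rintro ⟨k1, k2, k3⟩
    set T1 : Finset ClaimIdx := (Finset.range k1).image (fun i => some (Sum.inl i)) with hT1
    set T2 : Finset ClaimIdx :=
      (Finset.range k2).image (fun i => some (Sum.inr (Sum.inl i))) with hT2
    set T3 : Finset ClaimIdx :=
      (Finset.range k3).image (fun i => some (Sum.inr (Sum.inr i))) with hT3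
    have hnone : (none : ClaimIdx) ∉ T1 ∪ (T2 ∪ T3) := by simp [hT1, hT2, hT3]
    have hd23 : Disjoint T2 T3 := by
      simp only [hT2, hT3, Finset.disjoint_left, Finset.mem_image, Finset.mem_range]
      rintro a ⟨i, hi, rfl⟩ ⟨j, hj, h⟩
      simp at h
    have hd123 : Disjoint T1 (T2 ∪ T3) := by
      simp only [hT1, hT2, hT3, Finset.disjoint_left, Finset.mem_image, Finset.mem_union,
        Finset.mem_range]
      rintro a ⟨i, hi, rfl⟩ (⟨j, hj, h⟩ | ⟨j, hj, h⟩) <;> simp at h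
    have hsplit : ∀ c : ClaimIdx → ℝ,
        ∏ i ∈ insert none (T1 ∪ (T2 ∪ T3)), c i
          = c none * ((∏ i ∈ Finset.range k1, c (some (Sum.inl i))) *
            ((∏ i ∈ Finset.range k2, c (some (Sum.inr (Sum.inl i)))) *
             (∏ i ∈ Finset.range k3, c (some (Sum.inr (Sum.inr i)))))) := by
      intro c
      rw [Finset.prod_insert hnone, Finset.prod_union hd123, Finset.prod_union hd23, hT1, hT2,
        hT3, Finset.prod_image (fun x _ y _ h => by simpa using h),
        Finset.prod_image (fun x _ y _ h => by simpa using h),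
        Finset.prod_image (fun x _ y _ h => by simpa using h)]
    have key := aux_integral_prod claimMS (claimFam Q1 Q2 Q0 ξ1 ξ2 ξ34) hindep hfamm
      (claimPhi u1 u2 (k1, k2, k3)) (hφm _) (hφ0 _) (hφ1 _) (insert none (T1 ∪ (T2 ∪ T3)))
    -- identify the left-hand side of `key`
    have hpt : ∀ ω : Ω,
        (∏ i ∈ insert none (T1 ∪ (T2 ∪ T3)),
          claimPhi u1 u2 (k1, k2, k3) i (claimFam Q1 Q2 Q0 ξ1 ξ2 ξ34 i ω))
          = (A (k1, k2, k3)).indicator (fun ω' =>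
              Real.exp (Real.log u1 * ((∑ i ∈ Finset.range (Q1 ω'), ξ1 i ω') +
                ∑ i ∈ Finset.range (Q0 ω'), (ξ34 i ω').1)) *
              Real.exp (Real.log u2 * ((∑ i ∈ Finset.range (Q2 ω'), ξ2 i ω') +
                ∑ i ∈ Finset.range (Q0 ω'), (ξ34 i ω').2))) ω := by
      intro ω
      rw [hsplit]
      simp only [claimPhi, claimFam]
      have m1 : ∀ i : ℕ, max (ξ1 i ω) 0 = ξ1 i ω := fun i => max_eq_left (hξ1pos i ω)
      have m2 : ∀ i : ℕ, max (ξ2 i ω) 0 = ξ2 i ω := fun i => max_eq_left (hξ2pos i ω)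
      have m3 : ∀ i : ℕ, max (ξ34 i ω).1 0 = (ξ34 i ω).1 := fun i =>
        max_eq_left (hξ34pos i ω).1
      have m4 : ∀ i : ℕ, max (ξ34 i ω).2 0 = (ξ34 i ω).2 := fun i =>
        max_eq_left (hξ34pos i ω).2
      simp only [m1, m2, m3, m4, Set.indicator_apply]
      by_cases h : (Q1 ω, Q2 ω, Q0 ω) = (k1, k2, k3)
      · obtain ⟨e1, e2, e3⟩ : Q1 ω = k1 ∧ Q2 ω = k2 ∧ Q0 ω = k3 := by
          simpa [Prod.ext_iff] using h
        have hmem : ω ∈ A (k1, k2, k3) := by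
          rw [hA]; exact ⟨e1, e2, e3⟩
        simp only [h, eq_self_iff_true, if_true]
        rw [if_pos hmem, one_mul, e1, e2, e3]
        simp only [mul_add, Real.exp_add, Finset.mul_sum, Real.exp_sum,
          Finset.prod_mul_distrib]
        ring
      · have hmem : ω ∉ A (k1, k2, k3) := by
          rw [hA]
          intro hc
          exact h (by simpa [Prod.ext_iff] using hc)
        simp only [h, if_false]
        rw [if_neg hmem, zero_mul]
    have keyL : (∫ ω, ∏ i ∈ insert none (T1 ∪ (T2 ∪ T3)),
          claimPhi u1 u2 (k1, k2, k3) i (claimFam Q1 Q2 Q0 ξ1 ξ2 ξ34 i ω) ∂P)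
        = ∫ ω in A (k1, k2, k3),
          Real.exp (Real.log u1 * ((∑ i ∈ Finset.range (Q1 ω), ξ1 i ω) +
            ∑ i ∈ Finset.range (Q0 ω), (ξ34 i ω).1)) *
          Real.exp (Real.log u2 * ((∑ i ∈ Finset.range (Q2 ω), ξ2 i ω) +
            ∑ i ∈ Finset.range (Q0 ω), (ξ34 i ω).2)) ∂P := by
      rw [← integral_indicator (hAmeas _)]
      exact integral_congr_ae (ae_of_all _ hpt)
    -- identify the right-hand side of `key`
    have hfac0 : (∫ ω, claimPhi u1 u2 (k1, k2, k3) none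
        (claimFam Q1 Q2 Q0 ξ1 ξ2 ξ34 none ω) ∂P) = (P (A (k1, k2, k3))).toReal := by
      have e0 : (fun ω => claimPhi u1 u2 (k1, k2, k3) none
          (claimFam Q1 Q2 Q0 ξ1 ξ2 ξ34 none ω))
          = (A (k1, k2, k3)).indicator (1 : Ω → ℝ) := by
        funext ω
        simp only [claimPhi, claimFam, Set.indicator_apply, Pi.one_apply]
        by_cases h : (Q1 ω, Q2 ω, Q0 ω) = (k1, k2, k3)
        · simp only [h, eq_self_iff_true, if_true]
          rw [if_pos (by rw [hA]; exact (by simpa [Prod.ext_iff] using h))]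
        · simp only [h, if_false]
          rw [if_neg (by rw [hA]; intro hc; exact h (by simpa [Prod.ext_iff] using hc))]
      rw [e0, integral_indicator_one (hAmeas _)]; rfl
    have hfac1 : ∀ i : ℕ, (∫ ω, claimPhi u1 u2 (k1, k2, k3) (some (Sum.inl i))
        (claimFam Q1 Q2 Q0 ξ1 ξ2 ξ34 (some (Sum.inl i)) ω) ∂P) = g1 := by
      intro i
      have e1 : (fun ω => claimPhi u1 u2 (k1, k2, k3) (some (Sum.inl i))
          (claimFam Q1 Q2 Q0 ξ1 ξ2 ξ34 (some (Sum.inl i)) ω))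
          = fun ω => Real.exp (Real.log u1 * ξ1 i ω) := by
        funext ω
        simp only [claimPhi, claimFam]
        rw [max_eq_left (hξ1pos i ω)]
      rw [e1, hg1def]
      exact ((hξ1id i).comp ((measurable_id.const_mul _).exp)).integral_eq
    have hfac2 : ∀ i : ℕ, (∫ ω, claimPhi u1 u2 (k1, k2, k3) (some (Sum.inr (Sum.inl i)))
        (claimFam Q1 Q2 Q0 ξ1 ξ2 ξ34 (some (Sum.inr (Sum.inl i))) ω) ∂P) = g2 := by
      intro i
      have e1 : (fun ω => claimPhi u1 u2 (k1, k2, k3) (some (Sum.inr (Sum.inl i)))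
          (claimFam Q1 Q2 Q0 ξ1 ξ2 ξ34 (some (Sum.inr (Sum.inl i))) ω))
          = fun ω => Real.exp (Real.log u2 * ξ2 i ω) := by
        funext ω
        simp only [claimPhi, claimFam]
        rw [max_eq_left (hξ2pos i ω)]
      rw [e1, hg2def]
      exact ((hξ2id i).comp ((measurable_id.const_mul _).exp)).integral_eq
    have hfac3 : ∀ i : ℕ, (∫ ω, claimPhi u1 u2 (k1, k2, k3) (some (Sum.inr (Sum.inr i)))
        (claimFam Q1 Q2 Q0 ξ1 ξ2 ξ34 (some (Sum.inr (Sum.inr i))) ω) ∂P) = g3 := by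
      intro i
      have e1 : (fun ω => claimPhi u1 u2 (k1, k2, k3) (some (Sum.inr (Sum.inr i)))
          (claimFam Q1 Q2 Q0 ξ1 ξ2 ξ34 (some (Sum.inr (Sum.inr i))) ω))
          = fun ω => Real.exp (Real.log u1 * (ξ34 i ω).1) *
              Real.exp (Real.log u2 * (ξ34 i ω).2) := by
        funext ω
        simp only [claimPhi, claimFam]
        rw [max_eq_left (hξ34pos i ω).1, max_eq_left (hξ34pos i ω).2]
      rw [e1, hg3def]
      exact ((hξ34id i).comp
        (((measurable_fst.const_mul _).exp).mul ((measurable_snd.const_mul _).exp))).integral_eq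
    have keyR : (∏ i ∈ insert none (T1 ∪ (T2 ∪ T3)),
          ∫ ω, claimPhi u1 u2 (k1, k2, k3) i (claimFam Q1 Q2 Q0 ξ1 ξ2 ξ34 i ω) ∂P)
        = (P (A (k1, k2, k3))).toReal * (g1 ^ k1 * (g2 ^ k2 * g3 ^ k3)) := by
      rw [hsplit (fun i => ∫ ω, claimPhi u1 u2 (k1, k2, k3) i
        (claimFam Q1 Q2 Q0 ξ1 ξ2 ξ34 i ω) ∂P)]
      rw [hfac0, Finset.prod_congr rfl (fun i _ => hfac1 i),
        Finset.prod_congr rfl (fun i _ => hfac2 i), Finset.prod_congr rfl (fun i _ => hfac3 i),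
        Finset.prod_const, Finset.prod_const, Finset.prod_const, Finset.card_range,
        Finset.card_range, Finset.card_range]
    rw [← keyL, key, keyR]
  -- the exponential power series
  have hexp : ∀ y : ℝ, Real.exp y = ∑' n : ℕ, y ^ n / (n.factorial : ℝ) := by
    intro y
    rw [Real.exp_eq_exp_ℝ, NormedSpace.exp_eq_tsum_div]
  have hx0 : ∀ᵐ x ∂ν, (0:ℝ) ≤ x := by
    rw [ae_iff]
    have he : {x : ℝ | ¬ (0:ℝ) ≤ x} = Set.Iio 0 := by ext x; simp [not_le]
    rw [he]; exact hνsupp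
  -- bounds for the Poisson weights
  have hb : ∀ (l : ℝ), 0 < l → ∀ (n : ℕ) (x : ℝ), 0 ≤ x →
      0 ≤ Real.exp (-l * x) * (l * x) ^ n / (n.factorial : ℝ) ∧
      Real.exp (-l * x) * (l * x) ^ n / (n.factorial : ℝ) ≤ 1 := by
    intro l hl n x hx
    have hlx : 0 ≤ l * x := mul_nonneg hl.le hx
    constructor
    · positivity
    · have hterm : (l * x) ^ n / (n.factorial : ℝ) ≤ Real.exp (l * x) := by
        rw [hexp (l * x)]
        exact Summable.le_tsum (Real.summable_pow_div_factorial _) n (fun m _ => by positivity)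
      have e1 : Real.exp (-l * x) * (l * x) ^ n / (n.factorial : ℝ)
          = Real.exp (-(l * x)) * ((l * x) ^ n / (n.factorial : ℝ)) := by
        rw [neg_mul]; ring
      rw [e1]
      calc Real.exp (-(l * x)) * ((l * x) ^ n / (n.factorial : ℝ))
          ≤ Real.exp (-(l * x)) * Real.exp (l * x) :=
            mul_le_mul_of_nonneg_left hterm (Real.exp_pos _).le
        _ = 1 := by rw [← Real.exp_add]; simp
  -- Step 5: the cell probabilities in terms of ν
  have h5 : ∀ k : ℕ × ℕ × ℕ, (P (A k)).toReal
      = ∫ x, Real.exp (-l1 * x) * (l1 * x) ^ k.1 / (k.1.factorial : ℝ) *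
          (Real.exp (-l2 * x) * (l2 * x) ^ k.2.1 / (k.2.1.factorial : ℝ)) *
          (Real.exp (-l0 * x) * (l0 * x) ^ k.2.2 / (k.2.2.factorial : ℝ)) ∂ν := by
    rintro ⟨a, b, c⟩
    have hP : P (A (a, b, c)) = ENNReal.ofReal (∫ x,
        Real.exp (-l1 * x) * (l1 * x) ^ a / (a.factorial : ℝ) *
        (Real.exp (-l2 * x) * (l2 * x) ^ b / (b.factorial : ℝ)) *
        (Real.exp (-l0 * x) * (l0 * x) ^ c / (c.factorial : ℝ)) ∂ν) := hpmf a b c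
    rw [hP, ENNReal.toReal_ofReal]
    refine integral_nonneg_of_ae ?_
    filter_upwards [hx0] with x hx
    exact mul_nonneg (mul_nonneg (hb l1 hl1 a x hx).1 (hb l2 hl2 b x hx).1) (hb l0 hl0 c x hx).1
  -- summability of the cell probabilities
  have hPsum : Summable (fun k : ℕ × ℕ × ℕ => (P (A k)).toReal) := by
    apply ENNReal.summable_toReal
    rw [← measure_iUnion hAdisj hAmeas, hAunion]
    simp
  -- the mixed integrand family
  set H : (ℕ × ℕ × ℕ) → ℝ → ℝ := fun k x =>
    Real.exp (-l1 * x) * (l1 * x) ^ k.1 / (k.1.factorial : ℝ) *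
    (Real.exp (-l2 * x) * (l2 * x) ^ k.2.1 / (k.2.1.factorial : ℝ)) *
    (Real.exp (-l0 * x) * (l0 * x) ^ k.2.2 / (k.2.2.factorial : ℝ)) *
    (g1 ^ k.1 * (g2 ^ k.2.1 * g3 ^ k.2.2)) with hHdef
  have hq01 : ∀ k : ℕ × ℕ × ℕ, 0 ≤ g1 ^ k.1 * (g2 ^ k.2.1 * g3 ^ k.2.2) ∧
      g1 ^ k.1 * (g2 ^ k.2.1 * g3 ^ k.2.2) ≤ 1 := by
    intro k
    constructor
    · exact mul_nonneg (pow_nonneg hg1_nonneg _)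
        (mul_nonneg (pow_nonneg hg2_nonneg _) (pow_nonneg hg3_nonneg _))
    · exact mul_le_one₀ (pow_le_one₀ hg1_nonneg hg1_le)
        (mul_nonneg (pow_nonneg hg2_nonneg _) (pow_nonneg hg3_nonneg _))
        (mul_le_one₀ (pow_le_one₀ hg2_nonneg hg2_le) (pow_nonneg hg3_nonneg _)
          (pow_le_one₀ hg3_nonneg hg3_le))
  have hH01 : ∀ k : ℕ × ℕ × ℕ, ∀ x : ℝ, 0 ≤ x → 0 ≤ H k x ∧ H k x ≤ 1 := by
    intro k x hx
    have p1 := hb l1 hl1 k.1 x hx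
    have p2 := hb l2 hl2 k.2.1 x hx
    have p3 := hb l0 hl0 k.2.2 x hx
    have q := hq01 k
    rw [hHdef]
    constructor
    · exact mul_nonneg (mul_nonneg (mul_nonneg p1.1 p2.1) p3.1) q.1
    · exact mul_le_one₀ (mul_le_one₀ (mul_le_one₀ p1.2 p2.1 p2.2) p3.1 p3.2) q.1 q.2
  have hHmeas : ∀ k : ℕ × ℕ × ℕ, Measurable (H k) := by
    intro k
    rw [hHdef]
    fun_prop
  have hHint : ∀ k : ℕ × ℕ × ℕ, Integrable (H k) ν := by
    intro k
    refine Integrable.mono' (integrable_const (1:ℝ)) (hHmeas k).aestronglyMeasurable ?_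
    filter_upwards [hx0] with x hx
    rw [Real.norm_eq_abs, abs_of_nonneg (hH01 k x hx).1]
    exact (hH01 k x hx).2
  have hHnorm : ∀ k : ℕ × ℕ × ℕ, (∫ x, ‖H k x‖ ∂ν)
      = (P (A k)).toReal * (g1 ^ k.1 * (g2 ^ k.2.1 * g3 ^ k.2.2)) := by
    intro k
    rw [h5 k, ← integral_mul_const]
    refine integral_congr_ae ?_
    filter_upwards [hx0] with x hx
    rw [Real.norm_eq_abs, abs_of_nonneg (hH01 k x hx).1, hHdef]
  have hHsum : Summable (fun k : ℕ × ℕ × ℕ => ∫ x, ‖H k x‖ ∂ν) := by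
    refine Summable.of_nonneg_of_le (fun k => integral_nonneg fun x => norm_nonneg _)
      (fun k => ?_) hPsum
    rw [hHnorm k]
    exact mul_le_of_le_one_right ENNReal.toReal_nonneg (hq01 k).2
  have hswap := integral_tsum_of_summable_integral_norm hHint hHsum
  -- the pointwise sum of the family
  have hpt2 : ∀ x : ℝ, 0 ≤ x → (∑' k : ℕ × ℕ × ℕ, H k x)
      = Real.exp (-(l1 * (1 - g1) + l2 * (1 - g2) + l0 * (1 - g3)) * x) := by
    intro x hx
    set f1 : ℕ → ℝ := fun n => Real.exp (-l1 * x) * ((l1 * x * g1) ^ n / (n.factorial : ℝ))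
      with hf1def
    set f2 : ℕ → ℝ := fun n => Real.exp (-l2 * x) * ((l2 * x * g2) ^ n / (n.factorial : ℝ))
      with hf2def
    set f3 : ℕ → ℝ := fun n => Real.exp (-l0 * x) * ((l0 * x * g3) ^ n / (n.factorial : ℝ))
      with hf3def
    have s1 : Summable f1 := (Real.summable_pow_div_factorial (l1 * x * g1)).mul_left _
    have s2 : Summable f2 := (Real.summable_pow_div_factorial (l2 * x * g2)).mul_left _
    have s3 : Summable f3 := (Real.summable_pow_div_factorial (l0 * x * g3)).mul_left _
    have n1 : ∀ n, 0 ≤ f1 n := by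
      intro n; rw [hf1def]
      have : 0 ≤ l1 * x * g1 := mul_nonneg (mul_nonneg hl1.le hx) hg1_nonneg
      positivity
    have n2 : ∀ n, 0 ≤ f2 n := by
      intro n; rw [hf2def]
      have : 0 ≤ l2 * x * g2 := mul_nonneg (mul_nonneg hl2.le hx) hg2_nonneg
      positivity
    have n3 : ∀ n, 0 ≤ f3 n := by
      intro n; rw [hf3def]
      have : 0 ≤ l0 * x * g3 := mul_nonneg (mul_nonneg hl0.le hx) hg3_nonneg
      positivity
    have e1 : ∑' n, f1 n = Real.exp ((-l1 + l1 * g1) * x) := by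
      rw [hf1def, tsum_mul_left, ← hexp (l1 * x * g1), ← Real.exp_add]
      congr 1; ring
    have e2 : ∑' n, f2 n = Real.exp ((-l2 + l2 * g2) * x) := by
      rw [hf2def, tsum_mul_left, ← hexp (l2 * x * g2), ← Real.exp_add]
      congr 1; ring
    have e3 : ∑' n, f3 n = Real.exp ((-l0 + l0 * g3) * x) := by
      rw [hf3def, tsum_mul_left, ← hexp (l0 * x * g3), ← Real.exp_add]
      congr 1; ring
    have hHeq : ∀ k : ℕ × ℕ × ℕ, H k x = f1 k.1 * (f2 k.2.1 * f3 k.2.2) := by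
      rintro ⟨a, b, c⟩
      rw [hHdef, hf1def, hf2def, hf3def]
      simp only [mul_pow]
      ring
    calc (∑' k : ℕ × ℕ × ℕ, H k x)
        = ∑' k : ℕ × ℕ × ℕ, f1 k.1 * (f2 k.2.1 * f3 k.2.2) := tsum_congr hHeq
      _ = (∑' n, f1 n) * ((∑' n, f2 n) * (∑' n, f3 n)) :=
          tsum_triple_mul f1 f2 f3 s1 s2 s3 n1 n2 n3
      _ = Real.exp (-(l1 * (1 - g1) + l2 * (1 - g2) + l0 * (1 - g3)) * x) := by
          rw [e1, e2, e3, ← Real.exp_add, ← Real.exp_add]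
          congr 1; ring
  have hw : 0 ≤ l1 * (1 - g1) + l2 * (1 - g2) + l0 * (1 - g3) := by nlinarith
  calc ∫ ω, Real.exp (Real.log u1 * ((∑ i ∈ Finset.range (Q1 ω), ξ1 i ω) +
        ∑ i ∈ Finset.range (Q0 ω), (ξ34 i ω).1)) *
      Real.exp (Real.log u2 * ((∑ i ∈ Finset.range (Q2 ω), ξ2 i ω) +
        ∑ i ∈ Finset.range (Q0 ω), (ξ34 i ω).2)) ∂P
      = ∑' k : ℕ × ℕ × ℕ, ∫ ω in A k,
          Real.exp (Real.log u1 * ((∑ i ∈ Finset.range (Q1 ω), ξ1 i ω) +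
            ∑ i ∈ Finset.range (Q0 ω), (ξ34 i ω).1)) *
          Real.exp (Real.log u2 * ((∑ i ∈ Finset.range (Q2 ω), ξ2 i ω) +
            ∑ i ∈ Finset.range (Q0 ω), (ξ34 i ω).2)) ∂P := h1
    _ = ∑' k : ℕ × ℕ × ℕ, (P (A k)).toReal * (g1 ^ k.1 * (g2 ^ k.2.1 * g3 ^ k.2.2)) :=
        tsum_congr h2
    _ = ∑' k : ℕ × ℕ × ℕ, ∫ x, H k x ∂ν := by
        refine tsum_congr fun k => ?_
        rw [h5 k, ← integral_mul_const]
    _ = ∫ x, (∑' k : ℕ × ℕ × ℕ, H k x) ∂ν := hswap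
    _ = ∫ x, Real.exp (-(l1 * (1 - g1) + l2 * (1 - g2) + l0 * (1 - g3)) * x) ∂ν := by
        refine integral_congr_ae ?_
        filter_upwards [hx0] with x hx
        exact hpt2 x hx
    _ = (1 + μ⁻¹ * ((l1 * (1 - g1) + l2 * (1 - g2) + l0 * (1 - g3) + θ) ^ α - θ ^ α))
          ^ (-(ρ * t)) := hLap _ hw
end
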